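/- arXiv:2208.01381 — 8 statements merged into one kernel-verified Lean document; each statement's English description precedes it below -/
import Mathlib

section
/- Let ω: [0,∞) → [0,∞) be non-decreasing with ω(0) = 0, ω(u) > 0 for all u > 0, and ∫_0^1 du/ω(u) = +∞ (Osgood condition). Let I ⊂ ℝ be an interval, Ω ⊆ ℝ^n an open set, φ: I → [0,∞) a locally integrable function, and b: I × Ω → ℝ^n a function satisfying |b(t,x) − b(t,y)| ≤ φ(t) ω(|x−y|) for all t ∈ I and all x, y ∈ Ω. If J ⊆ I is a subinterval, s ∈ J, and γ₁, γ₂: J → Ω are absolutely continuous curves such that γᵢ'(t) = b(t, γᵢ(t)) for almost every t ∈ J (i = 1,2) and γ₁(s) = γ₂(s), then γ₁(t) = γ₂(t) for all t ∈ J. -/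
open MeasureTheory Set intervalIntegral
open scoped Interval

/-!
For `d = ‖γ₁ - γ₂‖` one has `d t ≤ ∫ φ · ω ∘ d` over the interval between `s` and `t`. The
nondecreasing majorant `G t = ∫ₛᵗ φ · ω ∘ d` satisfies `G q - G p ≤ ω (G q) (F q - F p)` with
`F` a primitive of `φ`. Summing `(G q - G p) / ω (G p)` over a partition on which `F` oscillates
little gives `∫_{G a}^{G t} du / ω u ≤ F t - F a`, the errors telescoping in `ω` (so `ω` need
not be continuous). If `G t > 0`, letting `G a ↓ 0` contradicts the Osgood condition. Times
before `s` are handled by `t ↦ -t`.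
-/

section Osgood

variable {ω : ℝ → ℝ}

theorem antitoneOn_one_div_of_monotoneOn (hω_mono : MonotoneOn ω (Ici 0))
    (hω_pos : ∀ u, 0 < u → 0 < ω u) : AntitoneOn (fun u => 1 / ω u) (Ioi 0) :=
  fun p hp _ hq hpq => one_div_le_one_div_of_le (hω_pos p hp)
    (hω_mono (Ioi_subset_Ici_self hp) (Ioi_subset_Ici_self hq) hpq)

theorem intervalIntegrable_one_div (hω_mono : MonotoneOn ω (Ici 0))
    (hω_pos : ∀ u, 0 < u → 0 < ω u) {p q : ℝ} (hp : 0 < p) (hq : 0 < q) :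
    IntervalIntegrable (fun u => 1 / ω u) volume p q :=
  ((antitoneOn_one_div_of_monotoneOn hω_mono hω_pos).mono
    fun _ hu => lt_of_lt_of_le (lt_min hp hq) hu.1).intervalIntegrable

theorem integral_one_div_le_sub_div (hω_mono : MonotoneOn ω (Ici 0))
    (hω_pos : ∀ u, 0 < u → 0 < ω u) {p q : ℝ} (hp : 0 < p) (hpq : p ≤ q) :
    ∫ u in p..q, 1 / ω u ≤ (q - p) / ω p := by
  calc ∫ u in p..q, 1 / ω u ≤ ∫ _ in p..q, 1 / ω p :=
        integral_mono_on hpq (intervalIntegrable_one_div hω_mono hω_pos hp (hp.trans_le hpq))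
          intervalIntegrable_const fun u hu =>
            antitoneOn_one_div_of_monotoneOn hω_mono hω_pos hp (hp.trans_le hu.1) hu.1
    _ = (q - p) / ω p := by rw [intervalIntegral.integral_const, smul_eq_mul, mul_one_div]

theorem integral_one_div_le_of_sub_le_mul_sub_nat (hω_mono : MonotoneOn ω (Ici 0))
    (hω_pos : ∀ u, 0 < u → 0 < ω u) {y z : ℕ → ℝ} {η : ℝ} (hη : 0 ≤ η)
    (hy0 : 0 < y 0) (hy : Monotone y)
    (hyz : ∀ i, y (i + 1) - y i ≤ ω (y (i + 1)) * (z (i + 1) - z i))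
    (hz : ∀ i, z (i + 1) - z i ≤ η) (N : ℕ) :
    ∫ u in y 0..y N, 1 / ω u ≤ z N - z 0 + η * (ω (y N) - ω (y 0)) / ω (y 0) := by
  induction N with
  | zero => simp
  | succ N ih =>
    have hpos : ∀ i, 0 < y i := fun i => hy0.trans_le (hy (Nat.zero_le i))
    have hω_le : ∀ {i j}, i ≤ j → ω (y i) ≤ ω (y j) := fun hij =>
      hω_mono (hpos _).le (hpos _).le (hy hij)
    have hωN := hω_pos _ (hpos N)
    have hlast : (y (N + 1) - y N) / ω (y N) ≤
        z (N + 1) - z N + η * (ω (y (N + 1)) - ω (y N)) / ω (y 0) :=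
      calc (y (N + 1) - y N) / ω (y N)
          ≤ z (N + 1) - z N + η * (ω (y (N + 1)) - ω (y N)) / ω (y N) := by
            rw [div_le_iff₀ hωN, add_mul, div_mul_cancel₀ _ hωN.ne']
            linarith [hyz N, mul_le_mul_of_nonneg_right (hz N) (sub_nonneg.2 (hω_le N.le_succ))]
        _ ≤ _ := by
            gcongr
            exacts [mul_nonneg hη (sub_nonneg.2 (hω_le N.le_succ)), hω_pos _ hy0,
              hω_le (Nat.zero_le N)]
    rw [← integral_add_adjacent_intervals (intervalIntegrable_one_div hω_mono hω_pos hy0 (hpos N))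
      (intervalIntegrable_one_div hω_mono hω_pos (hpos N) (hpos (N + 1)))]
    calc _ ≤ (z N - z 0 + η * (ω (y N) - ω (y 0)) / ω (y 0)) +
          (z (N + 1) - z N + η * (ω (y (N + 1)) - ω (y N)) / ω (y 0)) :=
        add_le_add ih
          ((integral_one_div_le_sub_div hω_mono hω_pos (hpos N) (hy N.le_succ)).trans hlast)
      _ = _ := by ring

theorem integral_one_div_le_sub_of_sub_le_mul_sub (hω_mono : MonotoneOn ω (Ici 0))
    (hω_pos : ∀ u, 0 < u → 0 < ω u) {G F : ℝ → ℝ} {a b : ℝ} (hab : a ≤ b)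
    (hG : MonotoneOn G (Icc a b)) (hGa : 0 < G a) (hF : ContinuousOn F (Icc a b))
    (hGF : ∀ p ∈ Icc a b, ∀ q ∈ Icc a b, p ≤ q → G q - G p ≤ ω (G q) * (F q - F p)) :
    ∫ u in G a..G b, 1 / ω u ≤ F b - F a := by
  have hωGa := hω_pos _ hGa
  set K := (ω (G b) - ω (G a)) / ω (G a)
  have hGab : G a ≤ G b := hG ⟨le_rfl, hab⟩ ⟨hab, le_rfl⟩ hab
  have hK : 0 ≤ K := div_nonneg (sub_nonneg.2 (hω_mono hGa.le (hGa.le.trans hGab) hGab)) hωGa.le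
  refine le_of_forall_pos_le_add fun η hη => ?_
  obtain ⟨h, hh, hFh⟩ := Metric.uniformContinuousOn_iff_le.mp
    (isCompact_Icc.uniformContinuousOn_of_continuous hF) (η / (K + 1)) (by positivity)
  obtain ⟨N, hN⟩ := exists_nat_ge ((b - a) / h)
  set x : ℕ → ℝ := fun i => min (a + i * h) b
  have hx_mem : ∀ i, x i ∈ Icc a b := fun i =>
    ⟨le_min (le_add_of_nonneg_right (by positivity)) hab, min_le_right _ _⟩
  have hx_mono : Monotone x := fun i j hij => min_le_min_right b (by gcongr)
  have hx0 : x 0 = a := by simp [x, hab]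
  have hxN : x N = b := by
    rw [div_le_iff₀ hh] at hN
    exact min_eq_right (by linarith)
  have hstep : ∀ i, dist (x (i + 1)) (x i) ≤ h := fun i => by
    refine (abs_min_sub_min_le_max _ _ _ _).trans ?_
    simp only [Nat.cast_succ, sub_self, abs_zero]
    rw [max_eq_left (abs_nonneg _), show a + (i + 1) * h - (a + i * h) = h by ring, abs_of_pos hh]
  have hsum := integral_one_div_le_of_sub_le_mul_sub_nat hω_mono hω_pos (y := G ∘ x) (z := F ∘ x)
    (by positivity) (by simpa [hx0] using hGa)
    (fun i j hij => hG (hx_mem i) (hx_mem j) (hx_mono hij))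
    (fun i => hGF _ (hx_mem i) _ (hx_mem (i + 1)) (hx_mono i.le_succ))
    (fun i => (le_abs_self _).trans (hFh _ (hx_mem (i + 1)) _ (hx_mem i) (hstep i))) N
  simp only [Function.comp, hx0, hxN] at hsum
  calc ∫ u in G a..G b, 1 / ω u ≤ F b - F a + η / (K + 1) * K := by
        rwa [mul_div_assoc] at hsum
    _ ≤ F b - F a + η := by
        gcongr
        rw [div_mul_eq_mul_div, div_le_iff₀ (by positivity)]
        nlinarith

theorem setLIntegral_Ioc_le_of_forall_Ioo {μ : Measure ℝ} {f : ℝ → ENNReal} {a b : ℝ}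
    {M : ENNReal} (h : ∀ c ∈ Ioo a b, ∫⁻ x in Ioc c b, f x ∂μ ≤ M) :
    ∫⁻ x in Ioc a b, f x ∂μ ≤ M := by
  have hcover : Ioc a b ⊆ ⋃ n : ℕ, Ioc (a + 1 / (n + 1)) b := fun u hu => by
    obtain ⟨n, hn⟩ := exists_nat_one_div_lt (sub_pos.2 hu.1)
    exact mem_iUnion.2 ⟨n, by linarith, hu.2⟩
  have hmono : Monotone fun n : ℕ => Ioc (a + 1 / (n + 1)) b := fun m n hmn =>
    Ioc_subset_Ioc_left (by gcongr)
  refine (lintegral_mono_set hcover).trans ?_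
  rw [setLIntegral_iUnion_of_directed _ hmono.directed_le]
  refine iSup_le fun n => ?_
  rcases lt_or_ge (a + 1 / (n + 1)) b with hlt | hge
  · exact h _ ⟨by simp only [lt_add_iff_pos_right]; positivity, hlt⟩
  · rw [Ioc_eq_empty (not_lt.2 hge), Measure.restrict_empty, lintegral_zero_measure]
    exact zero_le

theorem setLIntegral_one_div_Ioc_zero_eq_top (hω_mono : MonotoneOn ω (Ici 0))
    (hω_pos : ∀ u, 0 < u → 0 < ω u)
    (hOsgood : ∫⁻ u in Ioc (0 : ℝ) 1, ENNReal.ofReal (1 / ω u) = ⊤) {δ : ℝ} (hδ : 0 < δ) :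
    ∫⁻ u in Ioc 0 δ, ENNReal.ofReal (1 / ω u) = ⊤ := by
  have hfin : ∫⁻ u in Ioc δ 1, ENNReal.ofReal (1 / ω u) < ⊤ :=
    (intervalIntegrable_one_div hω_mono hω_pos hδ one_pos).1.lintegral_lt_top
  have hsplit : Ioc (0 : ℝ) 1 ⊆ Ioc 0 δ ∪ Ioc δ 1 := fun u hu => by
    rcases le_or_gt u δ with h | h
    exacts [Or.inl ⟨hu.1, h⟩, Or.inr ⟨h, hu.2⟩]
  by_contra hne
  refine (ENNReal.add_lt_top.2 ⟨lt_top_iff_ne_top.2 hne, hfin⟩).ne (top_le_iff.1 ?_)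
  calc ⊤ = ∫⁻ u in Ioc (0 : ℝ) 1, ENNReal.ofReal (1 / ω u) := hOsgood.symm
    _ ≤ ∫⁻ u in Ioc 0 δ ∪ Ioc δ 1, ENNReal.ofReal (1 / ω u) := lintegral_mono_set hsplit
    _ ≤ _ := lintegral_union_le _ _ _

theorem exists_lt_integral_one_div (hω_mono : MonotoneOn ω (Ici 0))
    (hω_pos : ∀ u, 0 < u → 0 < ω u)
    (hOsgood : ∫⁻ u in Ioc (0 : ℝ) 1, ENNReal.ofReal (1 / ω u) = ⊤) {δ : ℝ} (hδ : 0 < δ)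
    (C : ℝ) : ∃ ε ∈ Ioo 0 δ, C < ∫ u in ε..δ, 1 / ω u := by
  by_contra! h
  have hbound : ∫⁻ u in Ioc 0 δ, ENNReal.ofReal (1 / ω u) ≤ ENNReal.ofReal C := by
    refine setLIntegral_Ioc_le_of_forall_Ioo fun c hc => ?_
    have hint := (intervalIntegrable_one_div hω_mono hω_pos hc.1 hδ).1
    rw [← ofReal_integral_eq_lintegral_ofReal hint, ← integral_of_le hc.2.le]
    · exact ENNReal.ofReal_le_ofReal (h c hc)
    · filter_upwards [ae_restrict_mem measurableSet_Ioc] with u hu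
      exact (one_div_pos.2 (hω_pos u (hc.1.trans hu.1))).le
  rw [setLIntegral_one_div_Ioc_zero_eq_top hω_mono hω_pos hOsgood hδ] at hbound
  exact ENNReal.ofReal_ne_top (top_le_iff.1 hbound)

theorem IsCompact.integrableOn_mul_comp {α : Type*} [TopologicalSpace α] [T2Space α]
    [MeasurableSpace α] [OpensMeasurableSpace α] {μ : Measure α} {K : Set α} (hK : IsCompact K)
    (hω_mono : MonotoneOn ω (Ici 0)) (hω0 : 0 ≤ ω 0) {φ g : α → ℝ} (hφ : IntegrableOn φ K μ)
    (hg : ContinuousOn g K) (hg_nonneg : ∀ v ∈ K, 0 ≤ g v) :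
    IntegrableOn (fun v => φ v * ω (g v)) K μ := by
  obtain ⟨M, hM⟩ := hK.exists_bound_of_continuousOn hg
  have hωg : AEStronglyMeasurable (fun v => ω (g v)) (μ.restrict K) := by
    have hmono : Monotone fun u => ω (max u 0) := fun u v huv =>
      hω_mono (le_max_right u 0) (le_max_right v 0) (max_le_max_right 0 huv)
    refine (hmono.measurable.comp_aemeasurable
      (hg.aestronglyMeasurable hK.measurableSet).aemeasurable).aestronglyMeasurable.congr ?_
    filter_upwards [ae_restrict_mem hK.measurableSet] with v hv
    simp [max_eq_left (hg_nonneg v hv)]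
  simp_rw [mul_comm (φ _)]
  refine hφ.bdd_mul hωg (c := ω |M|) ?_
  filter_upwards [ae_restrict_mem hK.measurableSet] with v hv
  have hgv := hg_nonneg v hv
  rw [Real.norm_eq_abs, abs_of_nonneg (hω0.trans (hω_mono self_mem_Ici hgv hgv))]
  exact hω_mono hgv (abs_nonneg M) ((le_abs_self _).trans ((hM v hv).trans (le_abs_self M)))

theorem eqOn_zero_of_sub_le_mul_sub (hω_mono : MonotoneOn ω (Ici 0))
    (hω_pos : ∀ u, 0 < u → 0 < ω u)
    (hOsgood : ∫⁻ u in Ioc (0 : ℝ) 1, ENNReal.ofReal (1 / ω u) = ⊤) {G F : ℝ → ℝ} {s T : ℝ}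
    (hG : ContinuousOn G (Icc s T)) (hG_mono : MonotoneOn G (Icc s T)) (hGs : G s = 0)
    (hF : ContinuousOn F (Icc s T))
    (hGF : ∀ p ∈ Icc s T, ∀ q ∈ Icc s T, p ≤ q → G q - G p ≤ ω (G q) * (F q - F p)) :
    EqOn G 0 (Icc s T) := by
  intro t ht
  show G t = 0
  have hs : s ∈ Icc s T := ⟨le_rfl, ht.1.trans ht.2⟩
  refine le_antisymm ?_ (hGs ▸ hG_mono hs ht ht.1)
  by_contra! hGt
  obtain ⟨M, hM⟩ := isCompact_Icc.exists_bound_of_continuousOn hF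
  obtain ⟨ε, hε, hlt⟩ := exists_lt_integral_one_div hω_mono hω_pos hOsgood hGt (2 * M)
  obtain ⟨a, ha, hGa⟩ := intermediate_value_Icc ht.1 (hG.mono (Icc_subset_Icc_right ht.2))
    ⟨hGs ▸ hε.1.le, hε.2.le⟩
  have hsub : Icc a t ⊆ Icc s T := Icc_subset_Icc ha.1 ht.2
  have hA := integral_one_div_le_sub_of_sub_le_mul_sub hω_mono hω_pos ha.2 (hG_mono.mono hsub)
    (hGa ▸ hε.1) (hF.mono hsub) fun p hp q hq => hGF p (hsub hp) q (hsub hq)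
  rw [hGa] at hA
  have hFt := (abs_le.1 (hM t ht)).2
  have hFa := (abs_le.1 (hM a (hsub ⟨le_rfl, ha.2⟩))).1
  linarith

theorem eqOn_zero_of_le_integral_mul_comp (hω_mono : MonotoneOn ω (Ici 0)) (hω0 : 0 ≤ ω 0)
    (hω_pos : ∀ u, 0 < u → 0 < ω u)
    (hOsgood : ∫⁻ u in Ioc (0 : ℝ) 1, ENNReal.ofReal (1 / ω u) = ⊤) {φ g : ℝ → ℝ} {s T : ℝ}
    (hφ : IntegrableOn φ (Icc s T)) (hφ_nonneg : ∀ v ∈ Icc s T, 0 ≤ φ v)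
    (hg : ContinuousOn g (Icc s T)) (hg_nonneg : ∀ v ∈ Icc s T, 0 ≤ g v)
    (hle : ∀ t ∈ Icc s T, g t ≤ ∫ v in s..t, φ v * ω (g v)) :
    EqOn g 0 (Icc s T) := by
  intro t ht
  have hs : s ∈ Icc s T := ⟨le_rfl, ht.1.trans ht.2⟩
  have hint := isCompact_Icc.integrableOn_mul_comp hω_mono hω0 hφ hg hg_nonneg
  have hii : ∀ {f : ℝ → ℝ}, IntegrableOn f (Icc s T) → ∀ {p q}, p ∈ Icc s T → q ∈ Icc s T →
      IntervalIntegrable f volume p q := fun hf _ _ hp hq =>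
    (hf.mono_set (uIcc_subset_Icc hp hq)).intervalIntegrable
  have hprim : ∀ {f : ℝ → ℝ}, IntegrableOn f (Icc s T) →
      ContinuousOn (fun t => ∫ v in s..t, f v) (Icc s T) := fun hf => by
    rw [← uIcc_of_le hs.2] at hf ⊢
    exact continuousOn_primitive_interval hf
  have hsub : ∀ {f : ℝ → ℝ}, IntegrableOn f (Icc s T) → ∀ {p q}, p ∈ Icc s T → q ∈ Icc s T →
      (∫ v in s..q, f v) - ∫ v in s..p, f v = ∫ v in p..q, f v := fun hf _ _ hp hq =>
    integral_interval_sub_left (hii hf hs hq) (hii hf hs hp)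
  set G := fun t => ∫ v in s..t, φ v * ω (g v)
  have hG_mono : MonotoneOn G (Icc s T) := fun p hp q hq hpq => by
    refine sub_nonneg.1 ((hsub hint hp hq).symm ▸ integral_nonneg hpq fun v hv => ?_)
    have hv' : v ∈ Icc s T := ⟨hp.1.trans hv.1, hv.2.trans hq.2⟩
    have hgv := hg_nonneg v hv'
    exact mul_nonneg (hφ_nonneg v hv') (hω0.trans (hω_mono self_mem_Ici hgv hgv))
  have hGF : ∀ p ∈ Icc s T, ∀ q ∈ Icc s T, p ≤ q →
      G q - G p ≤ ω (G q) * ((∫ v in s..q, φ v) - ∫ v in s..p, φ v) := by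
    intro p hp q hq hpq
    rw [hsub hint hp hq, hsub hφ hp hq, ← intervalIntegral.integral_const_mul]
    refine integral_mono_on hpq (hii hint hp hq) ((hii hφ hp hq).const_mul _) fun v hv => ?_
    have hv' : v ∈ Icc s T := ⟨hp.1.trans hv.1, hv.2.trans hq.2⟩
    have hgv := hg_nonneg v hv'
    have hgG : g v ≤ G q := (hle v hv').trans (hG_mono hv' hq hv.2)
    rw [mul_comm]
    exact mul_le_mul_of_nonneg_right (hω_mono hgv (hgv.trans hgG) hgG) (hφ_nonneg v hv')
  have hG0 := eqOn_zero_of_sub_le_mul_sub hω_mono hω_pos hOsgood (hprim hint) hG_mono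
    integral_same (hprim hφ) hGF ht
  exact le_antisymm ((hle t ht).trans hG0.le) (hg_nonneg t ht)

theorem eqOn_zero_of_le_setIntegral_uIoc_mul_comp (hω_mono : MonotoneOn ω (Ici 0))
    (hω0 : 0 ≤ ω 0) (hω_pos : ∀ u, 0 < u → 0 < ω u)
    (hOsgood : ∫⁻ u in Ioc (0 : ℝ) 1, ENNReal.ofReal (1 / ω u) = ⊤) {φ g : ℝ → ℝ} {s t : ℝ}
    (hφ : IntegrableOn φ (uIcc s t)) (hφ_nonneg : ∀ v ∈ uIcc s t, 0 ≤ φ v)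
    (hg : ContinuousOn g (uIcc s t)) (hg_nonneg : ∀ v ∈ uIcc s t, 0 ≤ g v)
    (hle : ∀ u ∈ uIcc s t, g u ≤ ∫ v in Ι s u, φ v * ω (g v)) :
    EqOn g 0 (uIcc s t) := by
  rcases le_total s t with hst | hts
  · rw [uIcc_of_le hst] at *
    refine eqOn_zero_of_le_integral_mul_comp hω_mono hω0 hω_pos hOsgood hφ hφ_nonneg hg hg_nonneg
      fun u hu => ?_
    rw [integral_of_le hu.1, ← uIoc_of_le hu.1]
    exact hle u hu
  · rw [uIcc_of_ge hts] at *
    have hneg : ∀ {u}, u ∈ Icc (-s) (-t) → -u ∈ Icc t s := fun hu =>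
      ⟨le_neg_of_le_neg hu.2, neg_le.1 hu.1⟩
    have hrefl := eqOn_zero_of_le_integral_mul_comp (φ := fun v => φ (-v)) (g := fun v => g (-v))
      hω_mono hω0 hω_pos hOsgood (by simpa using hφ.comp_neg) (fun v hv => hφ_nonneg _ (hneg hv))
      (hg.comp continuousOn_neg fun v hv => hneg hv) (fun v hv => hg_nonneg _ (hneg hv))
      fun u hu => by
        rw [integral_comp_neg (fun v => φ v * ω (g v)), neg_neg, integral_of_le (hneg hu).2,
          ← uIoc_of_ge (hneg hu).2]
        exact hle _ (hneg hu)
    intro u hu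
    simpa using hrefl (show -u ∈ Icc (-s) (-t) from ⟨neg_le_neg hu.2, neg_le_neg hu.1⟩)

end Osgood

theorem stmt_5_general (n : ℕ) (ω : ℝ → ℝ)
    (hω_mono : MonotoneOn ω (Set.Ici 0)) (hω0 : ω 0 = 0)
    (hω_pos : ∀ u : ℝ, 0 < u → 0 < ω u)
    (hOsgood : ∫⁻ u in Set.Ioc (0:ℝ) 1, ENNReal.ofReal (1 / ω u) = ⊤)
    (I : Set ℝ)
    (Ω : Set (EuclideanSpace ℝ (Fin n)))
    (φ : ℝ → ℝ) (hφ_nonneg : ∀ t ∈ I, 0 ≤ φ t) (hφ : LocallyIntegrableOn φ I)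
    (b : ℝ → EuclideanSpace ℝ (Fin n) → EuclideanSpace ℝ (Fin n))
    (hb : ∀ t ∈ I, ∀ x ∈ Ω, ∀ y ∈ Ω, ‖b t x - b t y‖ ≤ φ t * ω ‖x - y‖)
    (J : Set ℝ) (hJI : J ⊆ I) (hJ : J.OrdConnected) (s : ℝ) (hs : s ∈ J)
    (γ₁ γ₂ : ℝ → EuclideanSpace ℝ (Fin n))
    (hγ₁Ω : ∀ t ∈ J, γ₁ t ∈ Ω) (hγ₂Ω : ∀ t ∈ J, γ₂ t ∈ Ω)
    (hγ₁int : ∀ t ∈ J, IntervalIntegrable (fun v => b v (γ₁ v)) volume s t)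
    (hγ₂int : ∀ t ∈ J, IntervalIntegrable (fun v => b v (γ₂ v)) volume s t)
    (hγ₁ : ∀ t ∈ J, γ₁ t = γ₁ s + ∫ v in s..t, b v (γ₁ v))
    (hγ₂ : ∀ t ∈ J, γ₂ t = γ₂ s + ∫ v in s..t, b v (γ₂ v))
    (hinit : γ₁ s = γ₂ s) :
    ∀ t ∈ J, γ₁ t = γ₂ t := by
  intro t ht
  set f := fun v => b v (γ₁ v) - b v (γ₂ v)
  have hsub : uIcc s t ⊆ J := hJ.uIcc_subset hs ht
  have hdiff : ∀ u ∈ J, γ₁ u - γ₂ u = ∫ v in s..u, f v := fun u hu => by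
    rw [hγ₁ u hu, hγ₂ u hu, hinit, integral_sub (hγ₁int u hu) (hγ₂int u hu)]
    abel
  have hf : IntegrableOn f (uIcc s t) :=
    (intervalIntegrable_iff' (by finiteness)).1 ((hγ₁int t ht).sub (hγ₂int t ht))
  have hφt : IntegrableOn φ (uIcc s t) :=
    hφ.integrableOn_compact_subset (hsub.trans hJI) isCompact_uIcc
  have hcont : ContinuousOn (fun u => ‖γ₁ u - γ₂ u‖) (uIcc s t) :=
    (continuousOn_primitive_interval hf).norm.congr fun u hu => by rw [hdiff u (hsub hu)]
  have hint := isCompact_uIcc.integrableOn_mul_comp hω_mono hω0.ge hφt hcont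
    fun _ _ => norm_nonneg _
  have hle : ∀ u ∈ uIcc s t, ‖γ₁ u - γ₂ u‖ ≤ ∫ v in Ι s u, φ v * ω ‖γ₁ v - γ₂ v‖ :=
    fun u hu => by
      have hΙ : Ι s u ⊆ uIcc s t := uIoc_subset_uIcc.trans (uIcc_subset_uIcc_left hu)
      rw [hdiff u (hsub hu)]
      refine norm_integral_le_integral_norm_uIoc.trans (setIntegral_mono_on
        ((hf.mono_set hΙ).norm) (hint.mono_set hΙ) measurableSet_uIoc fun v hv => ?_)
      have hv' := hsub (hΙ hv)
      exact hb v (hJI hv') _ (hγ₁Ω v hv') _ (hγ₂Ω v hv')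
  have h0 := eqOn_zero_of_le_setIntegral_uIoc_mul_comp hω_mono hω0.ge hω_pos hOsgood hφt
    (fun v hv => hφ_nonneg v (hJI (hsub hv))) hcont (fun _ _ => norm_nonneg _) hle right_mem_uIcc
  exact sub_eq_zero.1 (norm_eq_zero.1 h0)

theorem stmt_5 (n : ℕ) (ω : ℝ → ℝ)
    (hω_mono : MonotoneOn ω (Set.Ici 0)) (hω0 : ω 0 = 0)
    (hω_pos : ∀ u : ℝ, 0 < u → 0 < ω u)
    (hOsgood : ∫⁻ u in Set.Ioc (0:ℝ) 1, ENNReal.ofReal (1 / ω u) = ⊤)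
    (I : Set ℝ) (hI : I.OrdConnected)
    (Ω : Set (EuclideanSpace ℝ (Fin n))) (hΩ : IsOpen Ω)
    (φ : ℝ → ℝ) (hφ_nonneg : ∀ t ∈ I, 0 ≤ φ t) (hφ : LocallyIntegrableOn φ I)
    (b : ℝ → EuclideanSpace ℝ (Fin n) → EuclideanSpace ℝ (Fin n))
    (hb : ∀ t ∈ I, ∀ x ∈ Ω, ∀ y ∈ Ω, ‖b t x - b t y‖ ≤ φ t * ω ‖x - y‖)
    (J : Set ℝ) (hJI : J ⊆ I) (hJ : J.OrdConnected) (s : ℝ) (hs : s ∈ J)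
    (γ₁ γ₂ : ℝ → EuclideanSpace ℝ (Fin n))
    (hγ₁Ω : ∀ t ∈ J, γ₁ t ∈ Ω) (hγ₂Ω : ∀ t ∈ J, γ₂ t ∈ Ω)
    (hγ₁int : ∀ t ∈ J, IntervalIntegrable (fun v => b v (γ₁ v)) volume s t)
    (hγ₂int : ∀ t ∈ J, IntervalIntegrable (fun v => b v (γ₂ v)) volume s t)
    (hγ₁ : ∀ t ∈ J, γ₁ t = γ₁ s + ∫ v in s..t, b v (γ₁ v))
    (hγ₂ : ∀ t ∈ J, γ₂ t = γ₂ s + ∫ v in s..t, b v (γ₂ v))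
    (hinit : γ₁ s = γ₂ s) :
    ∀ t ∈ J, γ₁ t = γ₂ t :=
  stmt_5_general n ω hω_mono hω0 hω_pos hOsgood I Ω φ hφ_nonneg hφ b hb J hJI hJ s hs γ₁ γ₂ hγ₁Ω
    hγ₂Ω hγ₁int hγ₂int hγ₁ hγ₂ hinit
end

section
/- Let Θ: [1,∞) → (0,∞) be non-decreasing and locally Lipschitz, and let Θ' denote its almost-everywhere defined derivative. If ∫_1^∞ Θ'(s)/(s Θ(s)) ds = +∞, then Θ does not have polynomial growth: for every m ∈ ℕ one has limsup_{s→∞} Θ(s)/s^m = +∞. -/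
/-!
Suppose `Θ s ≤ M s ^ m` for large `s`; then `log Θ s ≤ C + m log s` on `[1, ∞)`.
On the dyadic block `[2 ^ k, 2 ^ (k + 1))` the weight `1 / s` is at most `2 ^ (-k)`, and since
`log ∘ Θ` is monotone, the integral of its a.e. derivative `Θ' / Θ` over the block is at most the
increment of `log Θ` across it. Hence the integral of `Θ' / (s Θ)` is bounded by
`∑ 2 ^ (-k) (log Θ (2 ^ (k + 1)) - log Θ (2 ^ k))`, a series with terms `O(k 2 ^ (-k))`.
-/

open MeasureTheory Set

theorem MonotoneOn.setLIntegral_Ioo_ofReal_le_sub {f f' : ℝ → ℝ} {a b : ℝ} (hab : a ≤ b)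
    (hf : MonotoneOn f (Icc a b))
    (hf' : ∀ᵐ x ∂volume.restrict (Ioo a b), HasDerivAt f (f' x) x) :
    ∫⁻ x in Ioo a b, ENNReal.ofReal (f' x) ≤ ENNReal.ofReal (f b - f a) := by
  have hf_uIcc : MonotoneOn f (uIcc a b) := uIcc_of_le hab ▸ hf
  have hderiv_nonneg : ∀ x ∈ Ioo a b, 0 ≤ deriv f x := fun x hx => by
    rw [← derivWithin_of_mem_nhds (Icc_mem_nhds hx.1 hx.2)]
    exact hf.derivWithin_nonneg
  have hint : IntegrableOn (deriv f) (Ioo a b) :=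
    ((intervalIntegrable_iff_integrableOn_Ioo_of_le hab).1 hf_uIcc.intervalIntegrable_deriv)
  have hFTC : ∫ x in Ioo a b, deriv f x ≤ f b - f a := by
    rw [← integral_Ioc_eq_integral_Ioo, ← intervalIntegral.integral_of_le hab]
    have := hf_uIcc.intervalIntegral_deriv_mem_uIcc
    rw [uIcc_of_le (sub_nonneg.2 (hf (left_mem_Icc.2 hab) (right_mem_Icc.2 hab) hab))] at this
    exact this.2
  calc ∫⁻ x in Ioo a b, ENNReal.ofReal (f' x)
      = ∫⁻ x in Ioo a b, ENNReal.ofReal (deriv f x) :=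
        lintegral_congr_ae (hf'.mono fun x hx => congrArg ENNReal.ofReal hx.deriv.symm)
    _ = ENNReal.ofReal (∫ x in Ioo a b, deriv f x) :=
        (ofReal_integral_eq_lintegral_ofReal hint
          (ae_restrict_of_forall_mem measurableSet_Ioo hderiv_nonneg)).symm
    _ ≤ ENNReal.ofReal (f b - f a) := ENNReal.ofReal_le_ofReal hFTC

theorem iUnion_Ico_pow_eq_Ici_one {y : ℝ} (hy : 1 < y) :
    ⋃ k : ℕ, Ico (y ^ k) (y ^ (k + 1)) = Ici 1 := by
  ext x
  simp only [mem_iUnion, mem_Ico, mem_Ici]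
  exact ⟨fun ⟨k, hk, _⟩ => (one_le_pow₀ hy.le).trans hk,
    fun hx => exists_nat_pow_near hx hy⟩

theorem MonotoneOn.setLIntegral_Ico_ofReal_div_le {f f' : ℝ → ℝ} {a b : ℝ} (ha : 0 < a)
    (hab : a ≤ b) (hf : MonotoneOn f (Icc a b))
    (hf' : ∀ᵐ x ∂volume.restrict (Ioo a b), HasDerivAt f (f' x) x) :
    ∫⁻ x in Ico a b, ENNReal.ofReal (f' x / x) ≤ ENNReal.ofReal ((f b - f a) / a) := by
  have hweight : ∀ x ∈ Ioo a b,
      ENNReal.ofReal (f' x / x) ≤ ENNReal.ofReal a⁻¹ * ENNReal.ofReal (f' x) := by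
    intro x hx
    rcases le_or_gt 0 (f' x) with h | h
    · rw [← ENNReal.ofReal_mul (inv_nonneg.2 ha.le), div_eq_inv_mul]
      exact ENNReal.ofReal_le_ofReal (mul_le_mul_of_nonneg_right (inv_anti₀ ha hx.1.le) h)
    · rw [ENNReal.ofReal_of_nonpos (div_nonpos_of_nonpos_of_nonneg h.le (ha.trans hx.1).le)]
      exact zero_le
  calc ∫⁻ x in Ico a b, ENNReal.ofReal (f' x / x)
      = ∫⁻ x in Ioo a b, ENNReal.ofReal (f' x / x) := setLIntegral_congr Ioo_ae_eq_Ico.symm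
    _ ≤ ∫⁻ x in Ioo a b, ENNReal.ofReal a⁻¹ * ENNReal.ofReal (f' x) :=
        setLIntegral_mono' measurableSet_Ioo hweight
    _ = ENNReal.ofReal a⁻¹ * ∫⁻ x in Ioo a b, ENNReal.ofReal (f' x) :=
        lintegral_const_mul' _ _ ENNReal.ofReal_ne_top
    _ ≤ ENNReal.ofReal a⁻¹ * ENNReal.ofReal (f b - f a) := by
        gcongr
        exact hf.setLIntegral_Ioo_ofReal_le_sub hab hf'
    _ = ENNReal.ofReal ((f b - f a) / a) := by
        rw [← ENNReal.ofReal_mul (inv_nonneg.2 ha.le), inv_mul_eq_div]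

theorem summable_sub_div_two_pow {u : ℕ → ℝ} (hu_mono : Monotone u) {C D : ℝ}
    (hbound : ∀ k : ℕ, u k ≤ C + D * k) :
    Summable fun k : ℕ => (u (k + 1) - u k) / 2 ^ k := by
  have hmajor : Summable fun k : ℕ =>
      (C + D - u 0) * (1 / 2 : ℝ) ^ k + D * ((k : ℝ) ^ 1 * (1 / 2) ^ k) :=
    (summable_geometric_two.mul_left _).add
      ((summable_pow_mul_geometric_of_norm_lt_one 1
        (by rw [Real.norm_of_nonneg (by norm_num)]; norm_num : ‖(1 / 2 : ℝ)‖ < 1)).mul_left _)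
  refine hmajor.of_nonneg_of_le
    (fun k => div_nonneg (sub_nonneg.2 (hu_mono k.le_succ)) (by positivity)) fun k => ?_
  have hk := hbound (k + 1)
  have h0 := hu_mono (Nat.zero_le k)
  push_cast at hk
  calc (u (k + 1) - u k) / 2 ^ k ≤ (C + D * (k + 1) - u 0) * (1 / 2) ^ k := by
        rw [div_eq_mul_one_div, one_div_pow]
        gcongr
    _ = (C + D - u 0) * (1 / 2) ^ k + D * ((k : ℝ) ^ 1 * (1 / 2) ^ k) := by ring

theorem MonotoneOn.lintegral_Ioi_one_ofReal_div_ne_top {L L' : ℝ → ℝ}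
    (hL : MonotoneOn L (Ici 1))
    (hL' : ∀ᵐ s ∂volume.restrict (Ioi 1), HasDerivAt L (L' s) s) {C D : ℝ}
    (hbound : ∀ s, 1 ≤ s → L s ≤ C + D * Real.log s) :
    ∫⁻ s in Ioi 1, ENNReal.ofReal (L' s / s) ≠ ⊤ := by
  set u : ℕ → ℝ := fun k => L (2 ^ k)
  have hu_mono : Monotone u := fun i j hij =>
    hL (mem_Ici.2 (one_le_pow₀ one_le_two)) (mem_Ici.2 (one_le_pow₀ one_le_two))
      (pow_le_pow_right₀ one_le_two hij)
  have hu_bound : ∀ k : ℕ, u k ≤ C + D * Real.log 2 * k := fun k => by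
    have := hbound (2 ^ k) (one_le_pow₀ one_le_two)
    rw [Real.log_pow] at this
    linarith
  have hpiece : ∀ k : ℕ, ∫⁻ s in Ico ((2 : ℝ) ^ k) (2 ^ (k + 1)), ENNReal.ofReal (L' s / s)
      ≤ ENNReal.ofReal ((u (k + 1) - u k) / 2 ^ k) := fun k =>
    (hL.mono (Icc_subset_Ici_iff (pow_le_pow_right₀ one_le_two k.le_succ) |>.2
      (one_le_pow₀ one_le_two))).setLIntegral_Ico_ofReal_div_le (by positivity)
      (pow_le_pow_right₀ one_le_two k.le_succ)
      (ae_restrict_of_ae_restrict_of_subset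
        (fun s hs => (one_le_pow₀ one_le_two).trans_lt hs.1) hL')
  rw [← lt_top_iff_ne_top]
  calc ∫⁻ s in Ioi 1, ENNReal.ofReal (L' s / s)
        ≤ ∫⁻ s in ⋃ k : ℕ, Ico ((2 : ℝ) ^ k) (2 ^ (k + 1)), ENNReal.ofReal (L' s / s) :=
          lintegral_mono_set (iUnion_Ico_pow_eq_Ici_one one_lt_two ▸ Ioi_subset_Ici_self)
      _ ≤ ∑' k : ℕ, ∫⁻ s in Ico ((2 : ℝ) ^ k) (2 ^ (k + 1)), ENNReal.ofReal (L' s / s) :=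
          lintegral_iUnion_le _ _
      _ ≤ ∑' k : ℕ, ENNReal.ofReal ((u (k + 1) - u k) / 2 ^ k) := ENNReal.tsum_le_tsum hpiece
      _ = ENNReal.ofReal (∑' k : ℕ, (u (k + 1) - u k) / 2 ^ k) :=
          (ENNReal.ofReal_tsum_of_nonneg
            (fun k => div_nonneg (sub_nonneg.2 (hu_mono k.le_succ)) (by positivity))
            (summable_sub_div_two_pow hu_mono hu_bound)).symm
      _ < ⊤ := ENNReal.ofReal_lt_top

theorem exists_log_le_of_eventually_div_pow_le {Θ : ℝ → ℝ} {m : ℕ} {M : ℝ}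
    (hpos : ∀ s : ℝ, 1 ≤ s → 0 < Θ s) (hmono : MonotoneOn Θ (Ici 1))
    (hbound : ∀ᶠ s in Filter.atTop, Θ s / s ^ m ≤ M) :
    ∃ C, ∀ s, 1 ≤ s → Real.log (Θ s) ≤ C + m * Real.log s := by
  obtain ⟨s₀, hs₀⟩ := Filter.eventually_atTop.1 hbound
  set s₁ := max s₀ 1
  have hs₁ : 1 ≤ s₁ := le_max_right _ _
  have htail : ∀ s, s₁ ≤ s → Real.log (Θ s) ≤ Real.log M + m * Real.log s := by
    intro s hs
    have hs_pos : 0 < s := zero_lt_one.trans_le (hs₁.trans hs)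
    have hΘ_le : Θ s ≤ M * s ^ m :=
      (div_le_iff₀ (pow_pos hs_pos m)).1 (hs₀ s ((le_max_left _ _).trans hs))
    have hΘ_pos : 0 < Θ s := hpos s (hs₁.trans hs)
    have hM : 0 < M := pos_of_mul_pos_left (hΘ_pos.trans_le hΘ_le) (by positivity)
    calc Real.log (Θ s) ≤ Real.log (M * s ^ m) := Real.log_le_log hΘ_pos hΘ_le
      _ = Real.log M + m * Real.log s := by
        rw [Real.log_mul hM.ne' (pow_pos hs_pos m).ne', Real.log_pow]
  refine ⟨max (Real.log (Θ s₁)) (Real.log M), fun s hs => ?_⟩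
  have hlog_nonneg : 0 ≤ m * Real.log s := mul_nonneg m.cast_nonneg (Real.log_nonneg hs)
  rcases le_total s s₁ with h | h
  · have := Real.log_le_log (hpos s hs) (hmono hs hs₁ h)
    linarith [le_max_left (Real.log (Θ s₁)) (Real.log M)]
  · linarith [htail s h, le_max_right (Real.log (Θ s₁)) (Real.log M)]

theorem stmt_6_general (Θ Θ' : ℝ → ℝ)
    (hΘ_pos : ∀ s : ℝ, 1 ≤ s → 0 < Θ s)
    (hΘ_mono : MonotoneOn Θ (Set.Ici 1))
    (hΘ_deriv : ∀ᵐ s ∂(volume.restrict (Set.Ici (1:ℝ))),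
      HasDerivWithinAt Θ (Θ' s) (Set.Ici 1) s)
    (hdiv : ∫⁻ s in Set.Ioi (1:ℝ), ENNReal.ofReal (Θ' s / (s * Θ s)) = ⊤) :
    ∀ m : ℕ, ∀ M : ℝ, ∃ᶠ s in Filter.atTop, M < Θ s / s ^ m := by
  intro m M
  by_contra hfreq
  obtain ⟨C, hC⟩ := exists_log_le_of_eventually_div_pow_le hΘ_pos hΘ_mono
    ((Filter.not_frequently.1 hfreq).mono fun _ => le_of_not_gt)
  have hlog_mono : MonotoneOn (fun s => Real.log (Θ s)) (Ici 1) := fun x hx y hy hxy =>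
    Real.log_le_log (hΘ_pos x hx) (hΘ_mono hx hy hxy)
  have hlog_deriv : ∀ᵐ s ∂volume.restrict (Ioi 1),
      HasDerivAt (fun s => Real.log (Θ s)) (Θ' s / Θ s) s := by
    filter_upwards [ae_restrict_of_ae_restrict_of_subset Ioi_subset_Ici_self hΘ_deriv,
      ae_restrict_mem measurableSet_Ioi] with s hs hs₁
    exact (hs.hasDerivAt (Ici_mem_nhds hs₁)).log (hΘ_pos s (le_of_lt hs₁)).ne'
  refine hlog_mono.lintegral_Ioi_one_ofReal_div_ne_top hlog_deriv hC ?_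
  simpa only [div_div, mul_comm] using hdiv

theorem stmt_6 (Θ Θ' : ℝ → ℝ)
    (hΘ_pos : ∀ s : ℝ, 1 ≤ s → 0 < Θ s)
    (hΘ_mono : MonotoneOn Θ (Set.Ici 1))
    (hΘ_lip : ∀ s ∈ Set.Ici (1:ℝ), ∃ K : NNReal, ∃ t ∈ nhdsWithin s (Set.Ici 1),
      LipschitzOnWith K Θ t)
    (hΘ_deriv : ∀ᵐ s ∂(volume.restrict (Set.Ici (1:ℝ))),
      HasDerivWithinAt Θ (Θ' s) (Set.Ici 1) s)
    (hdiv : ∫⁻ s in Set.Ioi (1:ℝ), ENNReal.ofReal (Θ' s / (s * Θ s)) = ⊤) :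
    ∀ m : ℕ, ∀ M : ℝ, ∃ᶠ s in Filter.atTop, M < Θ s / s ^ m :=
  stmt_6_general Θ Θ' hΘ_pos hΘ_mono hΘ_deriv hdiv
end

section
/- There exists a convex, strictly increasing, piecewise affine function Θ: [0,∞) → (0,∞) such that ∫_1^∞ Θ'(s)/(s Θ(s)) ds = +∞ (where Θ' is the a.e. derivative of Θ) and liminf_{s→∞} Θ(s)/s² < +∞. -/
/-!
Take for `Θ` the piecewise affine interpolation of `s ↦ s ^ 2 + 1` at nodes `0 = x₀ < x₁ < ⋯`
with `x_{n+1} = 2 x_n e^{x_n} + 1`. It is convex, lies above `s ^ 2 + 1` and agrees with it at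
the nodes, so `Θ (x_n) / x_n ^ 2 ≤ 2`. On `[a, b] = [x_n, x_{n+1}]` we have
`Θ s = (a + b) s - (a b - 1)`, and a logarithmic antiderivative gives
`∫_a^b Θ' / (s Θ) = (a + b) / (a b - 1) · log (Θ(b) a / (Θ(a) b)) ≥ (1 / a) · log (b / (2 a)) ≥ 1`,
so each of the infinitely many pieces contributes at least `1` to the integral.
-/

open MeasureTheory Real Set Filter Function

noncomputable def parabolaChord (a b s : ℝ) : ℝ := s ^ 2 + 1 - (s - a) * (s - b)

theorem parabolaChord_eq (a b s : ℝ) : parabolaChord a b s = (a + b) * s + (1 - a * b) := by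
  unfold parabolaChord; ring

@[simp] theorem parabolaChord_left (a b : ℝ) : parabolaChord a b a = a ^ 2 + 1 := by
  simp [parabolaChord]

@[simp] theorem parabolaChord_right (a b : ℝ) : parabolaChord a b b = b ^ 2 + 1 := by
  simp [parabolaChord]

theorem sq_add_one_le_parabolaChord {a b s : ℝ} (hs : s ∈ Icc a b) :
    s ^ 2 + 1 ≤ parabolaChord a b s := by
  unfold parabolaChord; nlinarith [hs.1, hs.2]

theorem parabolaChord_le_parabolaChord {a b c d s : ℝ} (hs : s ∈ Icc a b) (hcd : c ≤ d)
    (hout : d ≤ s ∨ s ≤ c) : parabolaChord c d s ≤ parabolaChord a b s := by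
  unfold parabolaChord
  rcases hout with h | h <;> nlinarith [hs.1, hs.2]

theorem parabolaChord_add_smul {a b t u y z : ℝ} (htu : t + u = 1) :
    parabolaChord a b (t * y + u * z) = t * parabolaChord a b y + u * parabolaChord a b z := by
  simp only [parabolaChord_eq]; linear_combination (1 - a * b) * htu.symm

theorem hasDerivAt_parabolaChord (a b s : ℝ) : HasDerivAt (parabolaChord a b) (a + b) s := by
  rw [show parabolaChord a b = fun s => (a + b) * s + (1 - a * b) from
    funext (parabolaChord_eq a b)]
  simpa using ((hasDerivAt_id s).const_mul (a + b)).add_const (1 - a * b)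

theorem parabolaChord_pos {a b s : ℝ} (hs : s ∈ Icc a b) : 0 < parabolaChord a b s :=
  (by positivity : (0 : ℝ) < s ^ 2 + 1).trans_le (sq_add_one_le_parabolaChord hs)

theorem continuousOn_div_mul_parabolaChord {a b : ℝ} (ha : 0 < a) :
    ContinuousOn (fun s => (a + b) / (s * parabolaChord a b s)) (Icc a b) := fun s hs =>
  (continuousAt_const.div (continuousAt_id.mul (hasDerivAt_parabolaChord a b s).continuousAt)
    (mul_pos (ha.trans_le hs.1) (parabolaChord_pos hs)).ne').continuousWithinAt

theorem integral_div_mul_parabolaChord {a b : ℝ} (ha : 1 ≤ a) (hab : a < b) :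
    ∫ s in a..b, (a + b) / (s * parabolaChord a b s) =
      (a + b) / (a * b - 1) * (log (b ^ 2 + 1) - log b - (log (a ^ 2 + 1) - log a)) := by
  have hD : 0 < a * b - 1 := by nlinarith
  rw [intervalIntegral.integral_eq_sub_of_hasDerivAt
    (f := fun s => (a + b) / (a * b - 1) * (log (parabolaChord a b s) - log s))]
  · simp only [parabolaChord_left, parabolaChord_right]; ring
  · intro s hs
    rw [uIcc_of_le hab.le] at hs
    have hs0 : 0 < s := by linarith [hs.1]
    have hc0 := parabolaChord_pos hs
    refine ((((hasDerivAt_parabolaChord a b s).log hc0.ne').sub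
      (hasDerivAt_log hs0.ne')).const_mul ((a + b) / (a * b - 1))).congr_deriv ?_
    rw [parabolaChord_eq] at hc0 ⊢
    field_simp
    ring
  · exact (continuousOn_div_mul_parabolaChord (by linarith)).intervalIntegrable_of_Icc hab.le

theorem one_le_integral_div_mul_parabolaChord {a b : ℝ} (ha : 1 ≤ a)
    (hb : 2 * a * exp a ≤ b) : 1 ≤ ∫ s in a..b, (a + b) / (s * parabolaChord a b s) := by
  have ha0 : 0 < a := by linarith
  have hexp : 1 ≤ exp a := one_le_exp ha0.le
  have hab : a < b := by nlinarith
  have hb0 : 0 < b := by linarith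
  rw [integral_div_mul_parabolaChord ha hab]
  have hlog_b : 2 * log b ≤ log (b ^ 2 + 1) := by
    rw [show 2 * log b = log (b ^ 2) by rw [log_pow]; norm_num]
    exact log_le_log (by positivity) (by linarith)
  have hlog_a : log (a ^ 2 + 1) ≤ log 2 + 2 * log a := by
    rw [show log 2 + 2 * log a = log (2 * a ^ 2) by
      rw [log_mul two_ne_zero (by positivity), log_pow]; norm_num]
    exact log_le_log (by positivity) (by nlinarith)
  have hlog_growth : log 2 + log a + a ≤ log b := by
    have := log_le_log (mul_pos (mul_pos two_pos ha0) (exp_pos a)) hb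
    rwa [log_mul (mul_pos two_pos ha0).ne' (exp_pos a).ne', log_mul two_ne_zero ha0.ne',
      log_exp] at this
  have hD : 0 < a * b - 1 := by nlinarith
  have hslope : 1 / a ≤ (a + b) / (a * b - 1) := by
    rw [div_le_div_iff₀ ha0 hD]; nlinarith
  calc (1 : ℝ) = 1 / a * a := by field_simp
    _ ≤ _ := mul_le_mul hslope (by linarith) ha0.le (div_nonneg (by linarith) hD.le)

theorem setLIntegral_eq_top_of_pairwise_disjoint {α : Type*} [MeasurableSpace α] {μ : Measure α}
    {f : α → ENNReal} {S : Set α} {I : ℕ → Set α} {ε : ENNReal} (hε : ε ≠ 0)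
    (hI : ∀ k, MeasurableSet (I k)) (hdisj : Pairwise (Disjoint on I)) (hsub : ∀ k, I k ⊆ S)
    (hbound : ∀ k, ε ≤ ∫⁻ s in I k, f s ∂μ) : ∫⁻ s in S, f s ∂μ = ⊤ :=
  top_le_iff.mp <| calc
    ⊤ = ∑' _ : ℕ, ε := (ENNReal.tsum_const_eq_top_of_ne_zero hε).symm
    _ ≤ ∑' k, ∫⁻ s in I k, f s ∂μ := ENNReal.tsum_le_tsum hbound
    _ = ∫⁻ s in ⋃ k, I k, f s ∂μ := (lintegral_iUnion hI hdisj _).symm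
    _ ≤ ∫⁻ s in S, f s ∂μ := lintegral_mono_set (iUnion_subset hsub)

-- On `Ici (x 0)` the supremum is attained (`chordInterp_eq_of_mem_Icc`); elsewhere the real `⨆`
-- may be the junk value of a family that is not bounded above.
noncomputable def chordInterp (x : ℕ → ℝ) (s : ℝ) : ℝ := ⨆ n, parabolaChord (x n) (x (n + 1)) s

section chordInterp

variable {x : ℕ → ℝ}

theorem exists_mem_Ico_of_tendsto_atTop (hx : Monotone x) (hx_top : Tendsto x atTop atTop)
    {s : ℝ} (hs : x 0 ≤ s) : ∃ m, s ∈ Ico (x m) (x (m + 1)) := by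
  have hcover := iUnion_Ico_map_succ_eq_Ici (fun n => hx (Nat.zero_le n))
    (not_bddAbove_of_tendsto_atTop hx_top)
  have hmem : s ∈ ⋃ n, Ico (x n) (x (Order.succ n)) := hcover ▸ hs
  simpa [Order.succ_eq_add_one] using hmem

theorem parabolaChord_le_of_mem_Icc (hx : Monotone x) {m : ℕ} {s : ℝ}
    (hs : s ∈ Icc (x m) (x (m + 1))) (n : ℕ) :
    parabolaChord (x n) (x (n + 1)) s ≤ parabolaChord (x m) (x (m + 1)) s := by
  rcases lt_trichotomy n m with h | rfl | h
  · exact parabolaChord_le_parabolaChord hs (hx n.le_succ) (.inl ((hx h).trans hs.1))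
  · exact le_rfl
  · exact parabolaChord_le_parabolaChord hs (hx n.le_succ) (.inr (hs.2.trans (hx h)))

theorem chordInterp_eq_of_mem_Icc (hx : Monotone x) {m : ℕ} {s : ℝ}
    (hs : s ∈ Icc (x m) (x (m + 1))) :
    chordInterp x s = parabolaChord (x m) (x (m + 1)) s :=
  ciSup_eq_of_forall_le_of_forall_lt_exists_gt (parabolaChord_le_of_mem_Icc hx hs)
    fun _ hw => ⟨m, hw⟩

theorem chordInterp_apply (hx : Monotone x) (n : ℕ) : chordInterp x (x n) = x n ^ 2 + 1 := by
  rw [chordInterp_eq_of_mem_Icc hx ⟨le_rfl, hx n.le_succ⟩, parabolaChord_left]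

theorem parabolaChord_le_chordInterp (hx : Monotone x) (hx_top : Tendsto x atTop atTop)
    {s : ℝ} (hs : x 0 ≤ s) (n : ℕ) : parabolaChord (x n) (x (n + 1)) s ≤ chordInterp x s := by
  obtain ⟨m, hm⟩ := exists_mem_Ico_of_tendsto_atTop hx hx_top hs
  rw [chordInterp_eq_of_mem_Icc hx (Ico_subset_Icc_self hm)]
  exact parabolaChord_le_of_mem_Icc hx (Ico_subset_Icc_self hm) n

theorem sq_add_one_le_chordInterp (hx : Monotone x) (hx_top : Tendsto x atTop atTop)
    {s : ℝ} (hs : x 0 ≤ s) : s ^ 2 + 1 ≤ chordInterp x s := by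
  obtain ⟨m, hm⟩ := exists_mem_Ico_of_tendsto_atTop hx hx_top hs
  rw [chordInterp_eq_of_mem_Icc hx (Ico_subset_Icc_self hm)]
  exact sq_add_one_le_parabolaChord (Ico_subset_Icc_self hm)

-- The upper envelope of the chords is attained at every point, by the chord through it.
theorem convexOn_chordInterp (hx : Monotone x) (hx_top : Tendsto x atTop atTop) :
    ConvexOn ℝ (Ici (x 0)) (chordInterp x) := by
  refine ⟨convex_Ici _, fun y hy z hz t u ht hu htu => ?_⟩
  obtain ⟨m, hm⟩ := exists_mem_Ico_of_tendsto_atTop hx hx_top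
    ((convex_Ici (x 0)) hy hz ht hu htu)
  simp only [smul_eq_mul] at hm ⊢
  rw [chordInterp_eq_of_mem_Icc hx (Ico_subset_Icc_self hm), parabolaChord_add_smul htu]
  gcongr
  · exact parabolaChord_le_chordInterp hx hx_top hy m
  · exact parabolaChord_le_chordInterp hx hx_top hz m

theorem strictMonoOn_chordInterp (hx : StrictMono x) (hx0 : 0 ≤ x 0)
    (hx_top : Tendsto x atTop atTop) : StrictMonoOn (chordInterp x) (Ici (x 0)) := by
  intro s hs t ht hst
  obtain ⟨m, hm⟩ := exists_mem_Ico_of_tendsto_atTop hx.monotone hx_top hs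
  have hslope : 0 < x m + x (m + 1) := by
    have := hx.monotone (Nat.zero_le m); have := hx m.lt_succ_self; linarith
  calc chordInterp x s = parabolaChord (x m) (x (m + 1)) s :=
        chordInterp_eq_of_mem_Icc hx.monotone (Ico_subset_Icc_self hm)
    _ < parabolaChord (x m) (x (m + 1)) t := by
        simp only [parabolaChord_eq]; gcongr
    _ ≤ chordInterp x t := parabolaChord_le_chordInterp hx.monotone hx_top ht m

theorem hasDerivAt_chordInterp (hx : Monotone x) {m : ℕ} {s : ℝ}
    (hs : s ∈ Ioo (x m) (x (m + 1))) : HasDerivAt (chordInterp x) (x m + x (m + 1)) s := by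
  refine (hasDerivAt_parabolaChord _ _ s).congr_of_eventuallyEq ?_
  filter_upwards [isOpen_Ioo.mem_nhds hs] with u hu
  exact chordInterp_eq_of_mem_Icc hx (Ioo_subset_Icc_self hu)

theorem ae_differentiableAt_chordInterp (hx : Monotone x) (hx_top : Tendsto x atTop atTop) :
    ∀ᵐ s ∂(volume.restrict (Ici (x 0))), DifferentiableAt ℝ (chordInterp x) s := by
  filter_upwards [ae_restrict_of_ae ((countable_range x).ae_notMem volume),
    ae_restrict_mem measurableSet_Ici] with s hs_node hs
  obtain ⟨m, hm⟩ := exists_mem_Ico_of_tendsto_atTop hx hx_top hs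
  exact (hasDerivAt_chordInterp hx
    ⟨hm.1.lt_of_ne fun h => hs_node ⟨m, h⟩, hm.2⟩).differentiableAt

theorem one_le_lintegral_chordInterp_Ioo (hx : Monotone x) {n : ℕ} (hn : 1 ≤ x n)
    (hgrowth : 2 * x n * exp (x n) ≤ x (n + 1)) :
    1 ≤ ∫⁻ s in Ioo (x n) (x (n + 1)),
      ENNReal.ofReal (deriv (chordInterp x) s / (s * chordInterp x s)) := by
  set a := x n
  set b := x (n + 1)
  set g : ℝ → ℝ := fun s => (a + b) / (s * parabolaChord a b s)
  have ha0 : 0 < a := by linarith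
  have hab : a < b := by nlinarith [one_le_exp ha0.le]
  have hg_nonneg : 0 ≤ᵐ[volume.restrict (Ioo a b)] g := by
    filter_upwards [ae_restrict_mem measurableSet_Ioo] with s hs
    have hc0 := parabolaChord_pos (Ioo_subset_Icc_self hs)
    exact div_nonneg (by linarith) (mul_pos (ha0.trans hs.1) hc0).le
  have hg_int : IntegrableOn g (Ioo a b) :=
    (continuousOn_div_mul_parabolaChord ha0).integrableOn_Icc.mono_set Ioo_subset_Icc_self
  have hintegrand : EqOn (fun s => ENNReal.ofReal (g s))
      (fun s => ENNReal.ofReal (deriv (chordInterp x) s / (s * chordInterp x s))) (Ioo a b) :=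
    fun s hs => by
      dsimp only
      rw [(hasDerivAt_chordInterp hx hs).deriv,
        chordInterp_eq_of_mem_Icc hx (Ioo_subset_Icc_self hs)]
  calc 1 ≤ ENNReal.ofReal (∫ s in a..b, g s) :=
        ENNReal.one_le_ofReal.mpr (one_le_integral_div_mul_parabolaChord hn hgrowth)
    _ = ∫⁻ s in Ioo a b, ENNReal.ofReal (g s) := by
        rw [intervalIntegral.integral_of_le hab.le, integral_Ioc_eq_integral_Ioo,
          ofReal_integral_eq_lintegral_ofReal hg_int hg_nonneg]
    _ = _ := setLIntegral_congr_fun measurableSet_Ioo hintegrand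

theorem lintegral_chordInterp_eq_top (hx : Monotone x) (hx1 : 1 ≤ x 1)
    (hgrowth : ∀ n, 2 * x n * exp (x n) ≤ x (n + 1)) :
    ∫⁻ s in Ioi 1, ENNReal.ofReal (deriv (chordInterp x) s / (s * chordInterp x s)) = ⊤ := by
  have hge : ∀ k, 1 ≤ x (k + 1) := fun k => hx1.trans (hx (by omega))
  refine setLIntegral_eq_top_of_pairwise_disjoint one_ne_zero
    (I := fun k => Ioo (x (k + 1)) (x (k + 2))) (fun _ => measurableSet_Ioo) ?_
    (fun k s hs => (hge k).trans_lt hs.1)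
    (fun k => one_le_lintegral_chordInterp_Ioo hx (hge k) (hgrowth (k + 1)))
  simpa [Order.succ_eq_add_one] using
    (hx.comp fun _ _ h => Nat.add_le_add_right h 1).pairwise_disjoint_on_Ioo_succ

theorem frequently_chordInterp_div_sq_le (hx : Monotone x) (hx_top : Tendsto x atTop atTop) :
    ∃ᶠ s in atTop, chordInterp x s / s ^ 2 ≤ 2 := by
  refine hx_top.frequently (Eventually.frequently ?_)
  filter_upwards [hx_top.eventually_ge_atTop 1] with n hn
  rw [chordInterp_apply hx, div_le_iff₀ (by positivity)]
  nlinarith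

end chordInterp

noncomputable def node : ℕ → ℝ
  | 0 => 0
  | n + 1 => 2 * node n * exp (node n) + 1

theorem node_succ (n : ℕ) : node (n + 1) = 2 * node n * exp (node n) + 1 := rfl

theorem two_mul_node_mul_exp_le (n : ℕ) : 2 * node n * exp (node n) ≤ node (n + 1) :=
  (node_succ n).symm ▸ le_add_of_nonneg_right zero_le_one

theorem node_nonneg (n : ℕ) : 0 ≤ node n := by
  induction n with
  | zero => exact le_rfl
  | succ n ih =>
    rw [node_succ]
    have := mul_nonneg (mul_nonneg zero_le_two ih) (exp_pos (node n)).le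
    linarith

theorem node_add_one_le (n : ℕ) : node n + 1 ≤ node (n + 1) := by
  have hexp := mul_le_mul_of_nonneg_left (one_le_exp (node_nonneg n)) (node_nonneg n)
  rw [node_succ]
  linarith [node_nonneg n]

theorem strictMono_node : StrictMono node :=
  strictMono_nat_of_lt_succ fun n => by linarith [node_add_one_le n]

theorem natCast_le_node (n : ℕ) : (n : ℝ) ≤ node n := by
  induction n with
  | zero => simp [node]
  | succ n ih => push_cast; linarith [node_add_one_le n]

theorem tendsto_node_atTop : Tendsto node atTop atTop :=
  tendsto_atTop_mono natCast_le_node tendsto_natCast_atTop_atTop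

theorem stmt_7 :
    ∃ Θ Θ' : ℝ → ℝ,
      ConvexOn ℝ (Set.Ici 0) Θ ∧
      StrictMonoOn Θ (Set.Ici 0) ∧
      (∀ s : ℝ, 0 ≤ s → 0 < Θ s) ∧
      (∃ x : ℕ → ℝ, x 0 = 0 ∧ StrictMono x ∧ Filter.Tendsto x Filter.atTop Filter.atTop ∧
        ∀ k : ℕ, ∃ a c : ℝ, ∀ s ∈ Set.Icc (x k) (x (k + 1)), Θ s = a * s + c) ∧
      (∀ᵐ s ∂(volume.restrict (Set.Ici (0:ℝ))), HasDerivWithinAt Θ (Θ' s) (Set.Ici 0) s) ∧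
      (∫⁻ s in Set.Ioi (1:ℝ), ENNReal.ofReal (Θ' s / (s * Θ s)) = ⊤) ∧
      (∃ M : ℝ, ∃ᶠ s in Filter.atTop, Θ s / s ^ 2 ≤ M) := by
  have hmono := strictMono_node.monotone
  refine ⟨chordInterp node, deriv (chordInterp node),
    convexOn_chordInterp hmono tendsto_node_atTop,
    strictMonoOn_chordInterp strictMono_node le_rfl tendsto_node_atTop,
    fun s hs => (by positivity : (0 : ℝ) < s ^ 2 + 1).trans_le
      (sq_add_one_le_chordInterp hmono tendsto_node_atTop hs),
    ⟨node, rfl, strictMono_node, tendsto_node_atTop, fun k => ⟨_, _, fun s hs =>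
      (chordInterp_eq_of_mem_Icc hmono hs).trans (parabolaChord_eq _ _ s)⟩⟩,
    ?_, lintegral_chordInterp_eq_top hmono ?_ two_mul_node_mul_exp_le,
    ⟨2, frequently_chordInterp_div_sq_le hmono tendsto_node_atTop⟩⟩
  · filter_upwards [ae_differentiableAt_chordInterp hmono tendsto_node_atTop] with s hs
    exact hs.hasDerivAt.hasDerivWithinAt
  · simp [node]
end

section
/- There exists s₀ > 1 such that for all real s, t ≥ s₀ one has s/log s + t/log t ≤ (s t)/log(s t); equivalently, exp(s/log s) · exp(t/log t) ≤ exp((s t)/log(s t)) for all s, t ≥ s₀. -/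
theorem stmt_8 :
    ∃ s₀ : ℝ, 1 < s₀ ∧ ∀ s t : ℝ, s₀ ≤ s → s₀ ≤ t →
      s / Real.log s + t / Real.log t ≤ (s * t) / Real.log (s * t) ∧
      Real.exp (s / Real.log s) * Real.exp (t / Real.log t) ≤
        Real.exp ((s * t) / Real.log (s * t)) := by
  refine ⟨Real.exp 4, ?_, ?_⟩
  · rw [show (1:ℝ) = Real.exp 0 from Real.exp_zero.symm]
    exact Real.exp_lt_exp.2 (by norm_num)
  · intro s t hs ht
    have hs0 : (0:ℝ) < s := lt_of_lt_of_le (Real.exp_pos 4) hs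
    have ht0 : (0:ℝ) < t := lt_of_lt_of_le (Real.exp_pos 4) ht
    have ha : (4:ℝ) ≤ Real.log s := by
      have := Real.log_le_log (Real.exp_pos 4) hs
      simpa [Real.log_exp] using this
    have hb : (4:ℝ) ≤ Real.log t := by
      have := Real.log_le_log (Real.exp_pos 4) ht
      simpa [Real.log_exp] using this
    have has : Real.log s ≤ s := (Real.log_le_sub_one_of_pos hs0).trans (by linarith)
    have hbt : Real.log t ≤ t := (Real.log_le_sub_one_of_pos ht0).trans (by linarith)
    set a := Real.log s
    set b := Real.log t
    have ha0 : (0:ℝ) < a := by linarith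
    have hb0 : (0:ℝ) < b := by linarith
    have hs4 : (4:ℝ) ≤ s := le_trans ha has
    have ht4 : (4:ℝ) ≤ t := le_trans hb hbt
    have hlog : Real.log (s * t) = a + b := Real.log_mul (ne_of_gt hs0) (ne_of_gt ht0)
    have key : (s * b + t * a) * (a + b) ≤ s * t * (a * b) := by
      have h1 : 0 ≤ s * b * (t - b) :=
        mul_nonneg (mul_nonneg hs0.le hb0.le) (by linarith)
      have h2 : 0 ≤ (a - 4) * (s * b * t) :=
        mul_nonneg (by linarith) (by positivity)
      have h3 : 0 ≤ t * a * (s - a) :=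
        mul_nonneg (mul_nonneg ht0.le ha0.le) (by linarith)
      have h4 : 0 ≤ (b - 4) * (t * a * s) :=
        mul_nonneg (by linarith) (by positivity)
      have h5 : 0 ≤ a * b * ((s - 2) * (t - 2) - 4) :=
        mul_nonneg (mul_nonneg ha0.le hb0.le) (by nlinarith)
      nlinarith [h1, h2, h3, h4, h5]
    have main : s / a + t / b ≤ (s * t) / (a + b) := by
      rw [div_add_div _ _ (ne_of_gt ha0) (ne_of_gt hb0),
        div_le_div_iff₀ (mul_pos ha0 hb0) (by linarith : (0:ℝ) < a + b)]
      nlinarith [key]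
    refine ⟨by rwa [hlog], ?_⟩
    rw [← Real.exp_add]
    exact Real.exp_le_exp.2 (by rwa [hlog])
end

section
/- Let s₀ > 0, β > 0, and let Θ: [s₀, ∞) → (0, ∞) be a C¹, strictly increasing function with lim_{s→∞} Θ(s) = +∞, and let Θ^{-1}: [Θ(s₀), ∞) → [s₀, ∞) denote its inverse. If ∫_{s₀}^∞ Θ'(s)/(s Θ(s)) ds = +∞, then ∫_0^{δ₀} dδ / ( δ · Θ^{-1}(δ^{−β}) ) = +∞, where δ₀ = Θ(s₀)^{−1/β}. -/
open MeasureTheory Set Topology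

/-! The substitution `δ = Θ(s)^(-1/β)` maps `(s₀, ∞)` injectively into `(0, δ₀)`. Along it
`δ^(-β) = Θ(s)`, so `Θ⁻¹(δ^(-β)) = s`, and `|dδ/ds| = (1/β) Θ'(s) Θ(s)^(-1/β-1)`; hence
`dδ / (δ Θ⁻¹(δ^(-β))) = (1/β) Θ'(s) / (s Θ(s)) ds`, and the divergent integral in `s` bounds the
integral in `δ` from below. -/

theorem lintegral_abs_deriv_mul_comp_le {s t : Set ℝ} (hs : MeasurableSet s) {f f' : ℝ → ℝ}
    (hf' : ∀ x ∈ s, HasDerivWithinAt f (f' x) s x) (hf : InjOn f s) (hst : MapsTo f s t)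
    (g : ℝ → ENNReal) :
    ∫⁻ x in s, ENNReal.ofReal |f' x| * g (f x) ≤ ∫⁻ y in t, g y := by
  rw [← lintegral_image_eq_lintegral_abs_deriv_mul hs hf' hf]
  exact lintegral_mono_set hst.image_subset

theorem DifferentiableOn.hasDerivAt_rpow_const {Θ : ℝ → ℝ} {s : Set ℝ} {x : ℝ} (p : ℝ)
    (hΘ : DifferentiableOn ℝ Θ s) (hs : s ∈ 𝓝 x) (hx : Θ x ≠ 0) :
    HasDerivAt (fun y => Θ y ^ p) (derivWithin Θ s x * p * Θ x ^ (p - 1)) x :=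
  ((hΘ x (mem_of_mem_nhds hs)).hasDerivWithinAt.hasDerivAt hs).rpow_const (Or.inl hx)

theorem StrictMonoOn.strictAntiOn_rpow_const_of_neg {Θ : ℝ → ℝ} {s : Set ℝ} {p : ℝ}
    (hΘ : StrictMonoOn Θ s) (hpos : ∀ x ∈ s, 0 < Θ x) (hp : p < 0) :
    StrictAntiOn (fun x => Θ x ^ p) s :=
  fun _ hx _ hy hxy => Real.rpow_lt_rpow_of_neg (hpos _ hx) (hΘ hx hy hxy) hp

theorem Real.rpow_neg_one_div_rpow_neg {T : ℝ} (β : ℝ) (hT : 0 ≤ T) (hβ : β ≠ 0) :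
    (T ^ (-(1 / β))) ^ (-β) = T := by
  rw [← one_div_neg_eq_neg_one_div, one_div]
  exact Real.rpow_inv_rpow hT (neg_ne_zero.2 hβ)

theorem ofReal_div_mul_le_abs_deriv_rpow_mul {β T x : ℝ} (D : ℝ) (hβ : 0 < β) (hT : 0 < T)
    (hx : 0 < x) :
    ENNReal.ofReal (1 / β) * ENNReal.ofReal (D / (x * T)) ≤
      ENNReal.ofReal |D * -(1 / β) * T ^ (-(1 / β) - 1)| *
        ENNReal.ofReal (1 / (T ^ (-(1 / β)) * x)) := by
  have habs : |D * -(1 / β) * T ^ (-(1 / β) - 1)| * (1 / (T ^ (-(1 / β)) * x)) =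
      1 / β * (|D| / (x * T)) := by
    rw [abs_mul, abs_mul, abs_neg, abs_of_pos (by positivity : 0 < 1 / β),
      abs_of_pos (Real.rpow_pos_of_pos hT _), Real.rpow_sub hT, Real.rpow_one]
    field_simp
  rw [← ENNReal.ofReal_mul (abs_nonneg _), habs, ← ENNReal.ofReal_mul (by positivity)]
  gcongr
  exact le_abs_self D

theorem stmt_11_general (s₀ β : ℝ) (hs₀ : 0 < s₀) (hβ : 0 < β)
    (Θ Θinv : ℝ → ℝ)
    (hΘ_pos : ∀ s : ℝ, s₀ ≤ s → 0 < Θ s)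
    (hΘ_mono : StrictMonoOn Θ (Set.Ici s₀))
    (hΘ_C1 : ContDiffOn ℝ 1 Θ (Set.Ici s₀))
    (hinv₁ : ∀ s : ℝ, s₀ ≤ s → Θinv (Θ s) = s)
    (hdiv : ∫⁻ s in Set.Ioi s₀,
      ENNReal.ofReal (derivWithin Θ (Set.Ici s₀) s / (s * Θ s)) = ⊤) :
    ∫⁻ δ in Set.Ioo (0:ℝ) (Θ s₀ ^ (-(1 / β))),
      ENNReal.ofReal (1 / (δ * Θinv (δ ^ (-β)))) = ⊤ := by
  have hanti := hΘ_mono.strictAntiOn_rpow_const_of_neg (fun x hx => hΘ_pos x hx)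
    (neg_neg_of_pos (one_div_pos.2 hβ))
  have hderiv : ∀ x ∈ Ioi s₀, HasDerivWithinAt (fun s => Θ s ^ (-(1 / β)))
      (derivWithin Θ (Ici s₀) x * -(1 / β) * Θ x ^ (-(1 / β) - 1)) (Ioi s₀) x := fun x hx =>
    ((hΘ_C1.differentiableOn one_ne_zero).hasDerivAt_rpow_const _ (Ici_mem_nhds hx)
      (hΘ_pos x hx.le).ne').hasDerivWithinAt
  have hmaps : MapsTo (fun s => Θ s ^ (-(1 / β))) (Ioi s₀) (Ioo 0 (Θ s₀ ^ (-(1 / β)))) :=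
    fun x hx => ⟨Real.rpow_pos_of_pos (hΘ_pos x hx.le) _,
      hanti self_mem_Ici (mem_Ici.2 hx.le) hx⟩
  refine top_le_iff.1 (le_trans ?_ (lintegral_abs_deriv_mul_comp_le measurableSet_Ioi hderiv
    (hanti.mono Ioi_subset_Ici_self).injOn hmaps _))
  calc ⊤ = ENNReal.ofReal (1 / β) *
        ∫⁻ s in Ioi s₀, ENNReal.ofReal (derivWithin Θ (Ici s₀) s / (s * Θ s)) := by
        rw [hdiv, ENNReal.mul_top (by simpa using hβ)]
    _ = ∫⁻ s in Ioi s₀, ENNReal.ofReal (1 / β) *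
          ENNReal.ofReal (derivWithin Θ (Ici s₀) s / (s * Θ s)) :=
        (lintegral_const_mul' _ _ ENNReal.ofReal_ne_top).symm
    _ ≤ _ := by
      refine setLIntegral_mono' measurableSet_Ioi fun x hx => ?_
      rw [Real.rpow_neg_one_div_rpow_neg β (hΘ_pos x hx.le).le hβ.ne', hinv₁ x hx.le]
      exact ofReal_div_mul_le_abs_deriv_rpow_mul _ hβ (hΘ_pos x hx.le) (hs₀.trans hx)

theorem stmt_11 (s₀ β : ℝ) (hs₀ : 0 < s₀) (hβ : 0 < β)
    (Θ Θinv : ℝ → ℝ)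
    (hΘ_pos : ∀ s : ℝ, s₀ ≤ s → 0 < Θ s)
    (hΘ_mono : StrictMonoOn Θ (Set.Ici s₀))
    (hΘ_C1 : ContDiffOn ℝ 1 Θ (Set.Ici s₀))
    (hΘ_top : Filter.Tendsto Θ Filter.atTop Filter.atTop)
    (hinv₁ : ∀ s : ℝ, s₀ ≤ s → Θinv (Θ s) = s)
    (hinv₂ : ∀ u : ℝ, Θ s₀ ≤ u → s₀ ≤ Θinv u ∧ Θ (Θinv u) = u)
    (hdiv : ∫⁻ s in Set.Ioi s₀,
      ENNReal.ofReal (derivWithin Θ (Set.Ici s₀) s / (s * Θ s)) = ⊤) :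
    ∫⁻ δ in Set.Ioo (0:ℝ) (Θ s₀ ^ (-(1 / β))),
      ENNReal.ofReal (1 / (δ * Θinv (δ ^ (-β)))) = ⊤ :=
  stmt_11_general s₀ β hs₀ hβ Θ Θinv hΘ_pos hΘ_mono hΘ_C1 hinv₁ hdiv
end

section
/- Let s₀ > 0, β > 0, and let Θ: [s₀, ∞) → (0, ∞) be a C¹, strictly increasing function with lim_{s→∞} Θ(s) = +∞ such that s ↦ Θ(s)^{1/β} is convex on [s₀, ∞) and ∫_{s₀}^∞ Θ'(s)/(s Θ(s)) ds = +∞. Then lim_{δ→0⁺} δ · Θ^{-1}(δ^{−β}) = 0, where Θ^{-1}: [Θ(s₀), ∞) → [s₀, ∞) denotes the inverse of Θ. -/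
/-!
Put `F = Θ ^ (1 / β)`, a positive convex function tending to infinity. For
`s = Θ⁻¹ (δ ^ (-β))` we have `F s = δ⁻¹`, so `δ * Θ⁻¹ (δ ^ (-β)) = s / F s` with `s → ∞`, and it
suffices that `F s / s → ∞`. Otherwise `F s ≤ C s` along a sequence `s → ∞`, and convexity bounds
every secant slope of `F`, hence `F'`, by `C`; since a convex function tending to infinity grows at
least linearly, `Θ' / (s Θ) = β F' / (s F) ≤ β C / (m s²)` for large `s`, so the integral of
`Θ' / (s Θ)` is finite.
-/

open MeasureTheory Set Filter Topology

namespace ConvexOn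

variable {F : ℝ → ℝ} {a : ℝ}

theorem derivWithin_le_of_frequently_le_mul (hF : ConvexOn ℝ (Ici a) F) {x C : ℝ}
    (hx : a ≤ x) (hdiff : DifferentiableWithinAt ℝ F (Ici a) x)
    (hC : ∃ᶠ z in atTop, F z ≤ C * z) : derivWithin F (Ici a) x ≤ C := by
  have hlim : Tendsto (fun z => C + (C * x - F x) / (z - x)) atTop (𝓝 C) := by
    simpa [sub_eq_add_neg] using tendsto_const_nhds.add
      (tendsto_const_nhds.div_atTop (tendsto_atTop_add_const_right _ (-x) tendsto_id))
  refine ge_of_tendsto_of_frequently hlim ?_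
  refine (hC.and_eventually (eventually_gt_atTop x)).mono fun z ⟨hz, hxz⟩ => ?_
  calc derivWithin F (Ici a) x ≤ slope F x z :=
        hF.derivWithin_le_slope hx (hx.trans hxz.le) hxz hdiff
    _ = (F z - F x) / (z - x) := slope_def_field F x z
    _ ≤ (C * z - F x) / (z - x) := by gcongr
    _ = C + (C * x - F x) / (z - x) := by field_simp [sub_ne_zero.mpr hxz.ne']; ring

theorem exists_pos_mul_le_of_tendsto_atTop (hF : ConvexOn ℝ (Ici a) F)
    (htop : Tendsto F atTop atTop) : ∃ m > 0, ∀ᶠ s in atTop, m * s ≤ F s := by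
  obtain ⟨b, hab, hFab⟩ :=
    ((eventually_gt_atTop a).and (htop.eventually_gt_atTop (F a))).exists
  set m := (F b - F a) / (b - a)
  have hm : 0 < m := div_pos (by linarith) (by linarith)
  refine ⟨m / 2, half_pos hm, ?_⟩
  filter_upwards [eventually_gt_atTop b, eventually_ge_atTop (2 * (b - F b / m))]
    with s hbs hs
  have hslope : m ≤ (F s - F b) / (s - b) :=
    hF.slope_mono_adjacent self_mem_Ici (hab.le.trans hbs.le) hab hbs
  rw [le_div_iff₀ (by linarith)] at hslope
  have : m * (b - F b / m) = m * b - F b := by field_simp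
  nlinarith

end ConvexOn

theorem setLIntegral_Ioi_ofReal_lt_top_of_le {g h : ℝ → ℝ} {a S : ℝ}
    (hg : ContinuousOn g (Ici a)) (hh : IntegrableOn h (Ioi S)) (hgh : ∀ s > S, g s ≤ h s) :
    ∫⁻ s in Ioi a, ENNReal.ofReal (g s) < ⊤ := by
  have hIcc : ∫⁻ s in Icc a S, ENNReal.ofReal (g s) < ⊤ :=
    (hg.mono Icc_subset_Ici_self).integrableOn_Icc.setLIntegral_lt_top
  have hIoi : ∫⁻ s in Ioi S, ENNReal.ofReal (g s) < ⊤ :=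
    (setLIntegral_mono' measurableSet_Ioi fun s hs => ENNReal.ofReal_le_ofReal (hgh s hs)).trans_lt
      hh.setLIntegral_lt_top
  have hsub : Ioi a ⊆ Icc a S ∪ Ioi S := fun s hs =>
    (le_or_gt s S).imp (fun h => ⟨hs.out.le, h⟩) id
  calc ∫⁻ s in Ioi a, ENNReal.ofReal (g s)
      ≤ ∫⁻ s in Icc a S ∪ Ioi S, ENNReal.ofReal (g s) := lintegral_mono_set hsub
    _ ≤ (∫⁻ s in Icc a S, ENNReal.ofReal (g s)) + ∫⁻ s in Ioi S, ENNReal.ofReal (g s) :=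
        lintegral_union_le _ _ _
    _ < ⊤ := ENNReal.add_lt_top.mpr ⟨hIcc, hIoi⟩

theorem derivWithin_rpow_const_div_rpow {f : ℝ → ℝ} {s : Set ℝ} {x : ℝ} (p : ℝ)
    (hf : DifferentiableWithinAt ℝ f s x) (hs : UniqueDiffWithinAt ℝ s x) (hx : 0 < f x) :
    derivWithin (fun y => f y ^ p) s x / f x ^ p = p * (derivWithin f s x / f x) := by
  rw [(hf.hasDerivWithinAt.rpow_const (Or.inl hx.ne')).derivWithin hs, Real.rpow_sub_one hx.ne']
  have := (Real.rpow_pos_of_pos hx p).ne'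
  field_simp

theorem tendsto_atTop_of_monotoneOn_of_rightInverse {Θ Θinv : ℝ → ℝ} {a : ℝ}
    (hmono : MonotoneOn Θ (Ici a)) (hinv : ∀ u, Θ a ≤ u → a ≤ Θinv u ∧ Θ (Θinv u) = u) :
    Tendsto Θinv atTop atTop := by
  refine tendsto_atTop.mpr fun b => ?_
  filter_upwards [eventually_gt_atTop (Θ (max a b))] with u hu
  have hb : a ≤ max a b := le_max_left a b
  obtain ⟨hau, hΘu⟩ := hinv u ((hmono self_mem_Ici hb hb).trans hu.le)
  by_contra! hlt
  have := hmono hau hb (hlt.le.trans (le_max_right a b))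
  linarith

theorem ConvexOn.tendsto_div_atTop_of_lintegral_eq_top {F : ℝ → ℝ} {a : ℝ} (ha : 0 < a)
    (hF : ConvexOn ℝ (Ici a) F) (hcont : ContinuousOn F (Ici a)) (hpos : ∀ s, a ≤ s → 0 < F s)
    (htop : Tendsto F atTop atTop)
    (hdiv : ∫⁻ s in Ioi a, ENNReal.ofReal (derivWithin F (Ici a) s / (s * F s)) = ⊤) :
    Tendsto (fun s => F s / s) atTop atTop := by
  by_contra hnot
  obtain ⟨C, hC⟩ : ∃ C, ∃ᶠ z in atTop, F z ≤ C * z := by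
    obtain ⟨C, hC⟩ := not_forall.mp (mt tendsto_atTop.mpr hnot)
    refine ⟨C, ((not_eventually.mp hC).and_eventually (eventually_gt_atTop 0)).mono ?_⟩
    exact fun z ⟨hz, hz0⟩ => ((div_le_iff₀ hz0).mp (not_le.mp hz).le)
  have hC0 : 0 ≤ C := by
    obtain ⟨z, hz, hza⟩ := (hC.and_eventually (eventually_ge_atTop a)).exists
    have := hpos z hza
    nlinarith
  have hderiv : ∀ s, a ≤ s → derivWithin F (Ici a) s ≤ C := fun s hs => by
    by_cases hd : DifferentiableWithinAt ℝ F (Ici a) s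
    · exact hF.derivWithin_le_of_frequently_le_mul hs hd hC
    · rwa [derivWithin_zero_of_not_differentiableWithinAt hd]
  obtain ⟨m, hm, hlin⟩ := hF.exists_pos_mul_le_of_tendsto_atTop htop
  obtain ⟨S, hS⟩ := eventually_atTop.mp hlin
  have hS' : 0 < max S 1 := lt_max_of_lt_right one_pos
  refine (setLIntegral_Ioi_ofReal_lt_top_of_le (a := a) (g := fun s => C / (s * F s))
    (h := fun s => C / m * s ^ (-2 : ℝ)) ?_
    ((integrableOn_Ioi_rpow_of_lt (by norm_num) hS').const_mul _) ?_).ne ?_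
  · exact continuousOn_const.div (continuousOn_id.mul hcont)
      fun s hs => (mul_pos (ha.trans_le hs) (hpos s hs)).ne'
  · intro s hs
    have hs0 : 0 < s := hS'.trans hs
    have hms : m * s ≤ F s := hS s ((le_max_left S 1).trans hs.le)
    rw [Real.rpow_neg hs0.le, Real.rpow_two]
    calc C / (s * F s) ≤ C / (s * (m * s)) := by gcongr
      _ = C / m * (s ^ 2)⁻¹ := by field_simp
  · refine top_unique (hdiv.symm.le.trans (setLIntegral_mono' measurableSet_Ioi fun s hs => ?_))
    have hs : a < s := hs
    have hsF : 0 < s * F s := mul_pos (ha.trans hs) (hpos s hs.le)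
    exact ENNReal.ofReal_le_ofReal (div_le_div_of_nonneg_right (hderiv s hs.le) hsF.le)

theorem lintegral_derivWithin_rpow_div_eq_top {Θ : ℝ → ℝ} {a p : ℝ} (hp : 0 < p)
    (hdiff : DifferentiableOn ℝ Θ (Ici a)) (hpos : ∀ s, a ≤ s → 0 < Θ s)
    (hdiv : ∫⁻ s in Ioi a, ENNReal.ofReal (derivWithin Θ (Ici a) s / (s * Θ s)) = ⊤) :
    ∫⁻ s in Ioi a, ENNReal.ofReal
      (derivWithin (fun y => Θ y ^ p) (Ici a) s / (s * Θ s ^ p)) = ⊤ := by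
  have hlogderiv : ∀ s ∈ Ioi a, derivWithin (fun y => Θ y ^ p) (Ici a) s / (s * Θ s ^ p)
      = p * (derivWithin Θ (Ici a) s / (s * Θ s)) := fun s hs => by
    have hs : a < s := hs
    rw [mul_comm s, mul_comm s, ← div_div, ← div_div, derivWithin_rpow_const_div_rpow p
      (hdiff s hs.le) (uniqueDiffOn_Ici a s hs.le) (hpos s hs.le), mul_div_assoc]
  rw [setLIntegral_congr_fun measurableSet_Ioi fun s hs => by
    rw [hlogderiv s hs, ENNReal.ofReal_mul hp.le], lintegral_const_mul' _ _ ENNReal.ofReal_ne_top,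
    hdiv, ENNReal.mul_top (ENNReal.ofReal_pos.mpr hp).ne']

theorem stmt_12_general (s₀ β : ℝ) (hs₀ : 0 < s₀) (hβ : 0 < β)
    (Θ Θinv : ℝ → ℝ)
    (hΘ_pos : ∀ s : ℝ, s₀ ≤ s → 0 < Θ s)
    (hΘ_mono : StrictMonoOn Θ (Set.Ici s₀))
    (hΘ_C1 : ContDiffOn ℝ 1 Θ (Set.Ici s₀))
    (hΘ_top : Filter.Tendsto Θ Filter.atTop Filter.atTop)
    (hΘ_conv : ConvexOn ℝ (Set.Ici s₀) (fun s => Θ s ^ (1 / β)))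
    (hinv₂ : ∀ u : ℝ, Θ s₀ ≤ u → s₀ ≤ Θinv u ∧ Θ (Θinv u) = u)
    (hdiv : ∫⁻ s in Set.Ioi s₀,
      ENNReal.ofReal (derivWithin Θ (Set.Ici s₀) s / (s * Θ s)) = ⊤) :
    Filter.Tendsto (fun δ : ℝ => δ * Θinv (δ ^ (-β)))
      (nhdsWithin 0 (Set.Ioi 0)) (nhds 0) := by
  set F : ℝ → ℝ := fun s => Θ s ^ (1 / β)
  have hdivF := lintegral_derivWithin_rpow_div_eq_top (one_div_pos.mpr hβ)
    (hΘ_C1.differentiableOn one_ne_zero) hΘ_pos hdiv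
  have hFs := hΘ_conv.tendsto_div_atTop_of_lintegral_eq_top hs₀
    (hΘ_C1.continuousOn.rpow_const fun s hs => Or.inl (hΘ_pos s hs).ne')
    (fun s hs => Real.rpow_pos_of_pos (hΘ_pos s hs) _)
    ((tendsto_rpow_atTop (by positivity)).comp hΘ_top) hdivF
  have hu := tendsto_rpow_neg_nhdsGT_zero (neg_lt_zero.mpr hβ)
  have hs := (tendsto_atTop_of_monotoneOn_of_rightInverse hΘ_mono.monotoneOn hinv₂).comp hu
  refine ((hFs.inv_tendsto_atTop.comp hs).congr' ?_)
  filter_upwards [self_mem_nhdsWithin, hu.eventually (eventually_ge_atTop (Θ s₀))] with δ hδ hδu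
  have hδ : 0 < δ := hδ
  have hF : F (Θinv (δ ^ (-β))) = δ⁻¹ := by
    simp only [F, (hinv₂ _ hδu).2, ← Real.rpow_mul hδ.le, neg_mul, mul_one_div_cancel hβ.ne',
      Real.rpow_neg_one]
  change (F (Θinv (δ ^ (-β))) / Θinv (δ ^ (-β)))⁻¹ = _
  rw [inv_div, hF, div_inv_eq_mul, mul_comm]

theorem stmt_12 (s₀ β : ℝ) (hs₀ : 0 < s₀) (hβ : 0 < β)
    (Θ Θinv : ℝ → ℝ)
    (hΘ_pos : ∀ s : ℝ, s₀ ≤ s → 0 < Θ s)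
    (hΘ_mono : StrictMonoOn Θ (Set.Ici s₀))
    (hΘ_C1 : ContDiffOn ℝ 1 Θ (Set.Ici s₀))
    (hΘ_top : Filter.Tendsto Θ Filter.atTop Filter.atTop)
    (hΘ_conv : ConvexOn ℝ (Set.Ici s₀) (fun s => Θ s ^ (1 / β)))
    (hinv₁ : ∀ s : ℝ, s₀ ≤ s → Θinv (Θ s) = s)
    (hinv₂ : ∀ u : ℝ, Θ s₀ ≤ u → s₀ ≤ Θinv u ∧ Θ (Θinv u) = u)
    (hdiv : ∫⁻ s in Set.Ioi s₀,
      ENNReal.ofReal (derivWithin Θ (Set.Ici s₀) s / (s * Θ s)) = ⊤) :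
    Filter.Tendsto (fun δ : ℝ => δ * Θinv (δ ^ (-β)))
      (nhdsWithin 0 (Set.Ioi 0)) (nhds 0) :=
  stmt_12_general s₀ β hs₀ hβ Θ Θinv hΘ_pos hΘ_mono hΘ_C1 hΘ_top hΘ_conv hinv₂ hdiv
end

section
/- Define b: ℝ → ℝ by b(x) = x · log(1/x) · (log log(1/x) − 1) for 0 < x < e^{−e} and b(x) = 0 otherwise, and for s, t ∈ ℝ and x ∈ (0, e^{−e}) set X(t,s,x) = exp( −e · ((1/e) log(1/x))^{exp(s−t)} ). Then: (i) b is continuous, X(t,s,x) ∈ (0, e^{−e}), X(s,s,x) = x, and ∂_t X(t,s,x) = b(X(t,s,x)) for all t, s ∈ ℝ and x ∈ (0, e^{−e}); (ii) for every t > 0 and every p > 1, ∫_0^{e^{−e}} |∂_x X(t,0,x)|^p dx = +∞. -/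
/-!
In the coordinate `A = (1/e) log (1/x)`, i.e. `x = exp (-e A)`, which maps `(0, e^{-e})` onto
`(1, ∞)`, the flow is `A ↦ A ^ e^{s-t}` and `b` becomes `x ↦ x · e A · log A`; part (i) is then
the chain rule. For (ii) put `θ = e^{-t} < 1`: then
`∂ₓ X(t,0,x) = exp (e A - e A^θ + (θ - 1) log A + log θ) = exp (e A + o(A))`,
so its `p`-th power eventually dominates `exp (e A) = 1/x`, which is not integrable at `0`.
-/

open MeasureTheory Real Filter Set Asymptotics Topology

noncomputable def loglogField (x : ℝ) : ℝ :=
  if x ∈ Ioo 0 (exp (-exp 1)) then x * log (1 / x) * (log (log (1 / x)) - 1) else 0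

noncomputable def loglogCoord (x : ℝ) : ℝ := (1 / exp 1) * log (1 / x)

noncomputable def loglogFlow (t s x : ℝ) : ℝ := exp (-exp 1 * loglogCoord x ^ exp (s - t))

lemma loglogCoord_exp (A : ℝ) : loglogCoord (exp (-exp 1 * A)) = A := by
  simp only [loglogCoord, one_div, log_inv, log_exp]
  field_simp

lemma exp_loglogCoord {x : ℝ} (hx : 0 < x) : exp (-exp 1 * loglogCoord x) = x := by
  rw [loglogCoord, one_div x, log_inv]
  field_simp
  exact exp_log hx

lemma exp_neg_exp_one_mul_mem_Ioo_iff {A : ℝ} :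
    exp (-exp 1 * A) ∈ Ioo 0 (exp (-exp 1)) ↔ 1 < A := by
  simp [exp_pos]

lemma one_lt_loglogCoord {x : ℝ} (hx : x ∈ Ioo 0 (exp (-exp 1))) : 1 < loglogCoord x := by
  rwa [← exp_neg_exp_one_mul_mem_Ioo_iff, exp_loglogCoord hx.1]

lemma tendsto_log_one_div_nhdsGT_zero : Tendsto (fun x => log (1 / x)) (𝓝[>] 0) atTop := by
  simp only [one_div, log_inv]
  exact tendsto_neg_atBot_atTop.comp tendsto_log_nhdsGT_zero

lemma tendsto_loglogCoord_nhdsGT_zero : Tendsto loglogCoord (𝓝[>] 0) atTop :=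
  tendsto_log_one_div_nhdsGT_zero.const_mul_atTop (by positivity)

lemma tendsto_mul_log_mul_log_log_nhdsGT_zero :
    Tendsto (fun x => x * log (1 / x) * (log (log (1 / x)) - 1)) (𝓝[>] 0) (𝓝 0) := by
  refine squeeze_zero_norm' ?_
    ((tendsto_pow_mul_exp_neg_atTop_nhds_zero 2).comp tendsto_log_one_div_nhdsGT_zero)
  filter_upwards [Ioo_mem_nhdsGT (exp_pos (-1))] with x hx
  have hL : 1 < log (1 / x) := by
    rw [one_div, log_inv, lt_neg, ← log_exp (-1)]
    exact log_lt_log hx.1 hx.2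
  have hxL : x = exp (-log (1 / x)) := by rw [one_div, log_inv, neg_neg, exp_log hx.1]
  set L := log (1 / x)
  have hlogL : |log L - 1| ≤ L := by
    have := log_le_sub_one_of_pos (by linarith : 0 < L)
    have := log_nonneg hL.le
    rw [abs_le]; constructor <;> linarith
  calc ‖x * L * (log L - 1)‖ = x * L * |log L - 1| := by
        rw [norm_mul, norm_mul, norm_of_nonneg hx.1.le, norm_of_nonneg (by linarith), norm_eq_abs]
    _ ≤ x * L * L := by gcongr; exact mul_nonneg hx.1.le (by linarith)
    _ = L ^ 2 * exp (-L) := by rw [hxL]; ring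

theorem continuous_loglogField : Continuous loglogField := by
  have hK : (0 : ℝ) < exp (-exp 1) := exp_pos _
  refine continuous_if ?_ ?_ continuousOn_const
  · rw [ofPred_mem_eq, frontier_Ioo hK]
    rintro a (rfl | rfl)
    · simp
    · simp [log_exp]
  · rw [ofPred_mem_eq, closure_Ioo hK.ne]
    rintro x ⟨hx0, hxK⟩
    rcases hx0.eq_or_lt with rfl | hx0
    · refine (continuousWithinAt_Ioi_iff_Ici.1 ?_).mono Icc_subset_Ici_self
      simpa [ContinuousWithinAt] using tendsto_mul_log_mul_log_log_nhdsGT_zero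
    · have hx1 : x < 1 := hxK.trans_lt (by simp [exp_pos])
      have : 0 < log (1 / x) := log_pos (by rw [lt_one_div one_pos hx0]; simpa)
      apply ContinuousAt.continuousWithinAt
      fun_prop (disch := positivity)

lemma loglogField_exp {A : ℝ} (hA : 1 < A) :
    loglogField (exp (-exp 1 * A)) = exp (-exp 1 * A) * (exp 1 * A * log A) := by
  have hlog : log (1 / exp (-exp 1 * A)) = exp 1 * A := by
    rw [one_div, log_inv, log_exp]; ring
  rw [loglogField, if_pos (exp_neg_exp_one_mul_mem_Ioo_iff.2 hA), hlog,
    log_mul (exp_pos 1).ne' (by linarith), log_exp]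
  ring

lemma loglogFlow_mem_Ioo (t s : ℝ) {x : ℝ} (hx : x ∈ Ioo 0 (exp (-exp 1))) :
    loglogFlow t s x ∈ Ioo 0 (exp (-exp 1)) :=
  exp_neg_exp_one_mul_mem_Ioo_iff.2 (one_lt_rpow (one_lt_loglogCoord hx) (exp_pos _))

lemma loglogFlow_self (s : ℝ) {x : ℝ} (hx : 0 < x) : loglogFlow s s x = x := by
  rw [loglogFlow, sub_self, exp_zero, rpow_one, exp_loglogCoord hx]

lemma hasDerivAt_loglogFlow_time (t s : ℝ) {x : ℝ} (hx : x ∈ Ioo 0 (exp (-exp 1))) :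
    HasDerivAt (fun τ => loglogFlow τ s x) (loglogField (loglogFlow t s x)) t := by
  set A := loglogCoord x
  have hA : 1 < A := one_lt_loglogCoord hx
  have hθ : HasDerivAt (fun τ => exp (s - τ)) (-exp (s - t)) t := by
    simpa using ((hasDerivAt_id t).const_sub s).exp
  have hAθ : HasDerivAt (fun τ => A ^ exp (s - τ)) (A ^ exp (s - t) * log A * -exp (s - t)) t :=
    (hasStrictDerivAt_const_rpow (by linarith) _).hasDerivAt.comp t hθ
  change HasDerivAt (fun τ => exp (-exp 1 * A ^ exp (s - τ)))
    (loglogField (exp (-exp 1 * A ^ exp (s - t)))) t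
  rw [loglogField_exp (one_lt_rpow hA (exp_pos _)), log_rpow (by linarith)]
  convert (hAθ.const_mul (-exp 1)).exp using 1
  ring

lemma hasDerivAt_loglogFlow (t s : ℝ) {A : ℝ} (hA : 0 < A) :
    HasDerivAt (loglogFlow t s)
      (exp (-exp 1 * A ^ exp (s - t)) * exp (s - t) * A ^ (exp (s - t) - 1) * exp (exp 1 * A))
      (exp (-exp 1 * A)) := by
  set y := exp (-exp 1 * A)
  have hcoord : HasDerivAt loglogCoord ((1 / exp 1) * -y⁻¹) y := by
    have : loglogCoord = fun y => (1 / exp 1) * -log y := by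
      funext y; rw [loglogCoord, one_div y, log_inv]
    rw [this]
    exact (hasDerivAt_log (exp_pos _).ne').neg.const_mul _
  have hAy : loglogCoord y = A := loglogCoord_exp A
  have hflow := ((hcoord.rpow_const (p := exp (s - t)) (Or.inl (hAy ▸ hA.ne'))).const_mul
    (-exp 1)).exp
  refine hflow.congr_deriv ?_
  rw [hAy, ← exp_neg, show -(-exp 1 * A) = exp 1 * A by ring]
  field_simp

lemma isLittleO_rpow_id_atTop {θ : ℝ} (hθ : θ < 1) : (fun A : ℝ => A ^ θ) =o[atTop] id := by
  refine (isLittleO_iff_tendsto' ?_).2 ?_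
  · filter_upwards [eventually_gt_atTop 0] with A hA h
    exact absurd h hA.ne'
  · refine (tendsto_rpow_neg_atTop (by linarith : 0 < 1 - θ)).congr' ?_
    filter_upwards [eventually_gt_atTop 0] with A hA
    rw [id, ← rpow_sub_one hA.ne', neg_sub]

lemma eventually_exp_mul_le_rpow {c θ p : ℝ} (hc : 0 < c) (hθ0 : 0 < θ) (hθ1 : θ < 1)
    (hp : 1 < p) :
    ∀ᶠ A in atTop, exp (c * A) ≤ (exp (-c * A ^ θ) * θ * A ^ (θ - 1) * exp (c * A)) ^ p := by
  have hr : (fun A => -c * A ^ θ + (θ - 1) * log A + log θ) =o[atTop] id :=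
    (((isLittleO_rpow_id_atTop hθ1).const_mul_left (-c)).add
      (isLittleO_log_id_atTop.const_mul_left (θ - 1))).add (isLittleO_const_id_atTop _)
  -- `ε` is chosen so that `p * (c - ε) = c`.
  have hε : 0 < c * (1 - 1 / p) := mul_pos hc (by rw [sub_pos, div_lt_one] <;> linarith)
  filter_upwards [hr.bound hε, eventually_gt_atTop 0] with A hrA hA
  set r := -c * A ^ θ + (θ - 1) * log A + log θ
  have hprod : exp (-c * A ^ θ) * θ * A ^ (θ - 1) * exp (c * A) = exp (c * A + r) := by
    rw [exp_add, exp_add, exp_add, exp_log hθ0, mul_comm (θ - 1), ← rpow_def_of_pos hA]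
    ring
  rw [norm_eq_abs, norm_eq_abs, id, abs_of_pos hA] at hrA
  have hpε : p * (c * (1 - 1 / p) * A) = c * A * (p - 1) := by
    field_simp
  rw [hprod, ← exp_mul, exp_le_exp]
  nlinarith [neg_abs_le r, mul_le_mul_of_nonneg_left hrA (by linarith : 0 ≤ p)]

lemma lintegral_Ioo_zero_inv_eq_top {δ : ℝ} (hδ : 0 < δ) :
    ∫⁻ x in Ioo 0 δ, ENNReal.ofReal x⁻¹ = ⊤ := by
  by_contra h
  have hint : IntegrableOn (fun x : ℝ => x⁻¹) (Ioo 0 δ) := by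
    refine (lintegral_ofReal_ne_top_iff_integrable measurable_inv.aestronglyMeasurable ?_).1 h
    filter_upwards [ae_restrict_mem measurableSet_Ioo] with x hx
    exact inv_nonneg.2 hx.1.le
  exact lt_irrefl _ <| (intervalIntegral.integrableOn_Ioo_rpow_iff hδ).1 <|
    hint.congr_fun (fun x _ => (rpow_neg_one x).symm) measurableSet_Ioo

lemma lintegral_Ioo_zero_eq_top_of_inv_le {f : ℝ → ℝ} {a : ℝ} (ha : 0 < a)
    (hf : ∀ᶠ x in 𝓝[>] 0, x⁻¹ ≤ f x) : ∫⁻ x in Ioo 0 a, ENNReal.ofReal (f x) = ⊤ := by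
  obtain ⟨δ, hδ, hsub⟩ := mem_nhdsGT_iff_exists_Ioo_subset.1 hf
  refine top_le_iff.1 ?_
  calc ⊤ = ∫⁻ x in Ioo 0 (min δ a), ENNReal.ofReal x⁻¹ :=
        (lintegral_Ioo_zero_inv_eq_top (lt_min hδ ha)).symm
    _ ≤ ∫⁻ x in Ioo 0 (min δ a), ENNReal.ofReal (f x) :=
        setLIntegral_mono' measurableSet_Ioo fun x hx =>
          ENNReal.ofReal_le_ofReal (hsub ⟨hx.1, hx.2.trans_le (min_le_left _ _)⟩)
    _ ≤ ∫⁻ x in Ioo 0 a, ENNReal.ofReal (f x) :=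
        lintegral_mono_set (Ioo_subset_Ioo_right (min_le_right _ _))

lemma eventually_inv_le_abs_deriv_loglogFlow_rpow {t p : ℝ} (ht : 0 < t) (hp : 1 < p) :
    ∀ᶠ x in 𝓝[>] 0, x⁻¹ ≤ |deriv (loglogFlow t 0) x| ^ p := by
  have hθ0 : 0 < exp (0 - t) := exp_pos _
  have hθ1 : exp (0 - t) < 1 := exp_lt_one_iff.2 (by linarith)
  filter_upwards [tendsto_loglogCoord_nhdsGT_zero.eventually
      ((eventually_exp_mul_le_rpow (exp_pos 1) hθ0 hθ1 hp).and (eventually_gt_atTop 0)),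
    self_mem_nhdsWithin] with x ⟨hgrowth, hA⟩ (hx : 0 < x)
  rw [← exp_loglogCoord hx, (hasDerivAt_loglogFlow t 0 hA).deriv, abs_of_pos (by positivity), ← exp_neg, neg_mul,
    neg_neg]
  exact hgrowth

theorem stmt_15 (b : ℝ → ℝ)
    (hb : ∀ x : ℝ, b x = if x ∈ Set.Ioo (0:ℝ) (Real.exp (-Real.exp 1)) then
      x * Real.log (1 / x) * (Real.log (Real.log (1 / x)) - 1) else 0)
    (X : ℝ → ℝ → ℝ → ℝ)
    (hX : ∀ t s x : ℝ, X t s x =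
      Real.exp (-(Real.exp 1) * ((1 / Real.exp 1) * Real.log (1 / x)) ^ Real.exp (s - t))) :
    Continuous b ∧
    (∀ t s : ℝ, ∀ x ∈ Set.Ioo (0:ℝ) (Real.exp (-Real.exp 1)),
      X t s x ∈ Set.Ioo (0:ℝ) (Real.exp (-Real.exp 1)) ∧
      X s s x = x ∧
      HasDerivAt (fun τ => X τ s x) (b (X t s x)) t) ∧
    (∀ t : ℝ, 0 < t → ∀ p : ℝ, 1 < p →
      ∫⁻ x in Set.Ioo (0:ℝ) (Real.exp (-Real.exp 1)),
        ENNReal.ofReal (|deriv (fun y => X t 0 y) x| ^ p) = ⊤) := by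
  obtain rfl : b = loglogField := funext hb
  obtain rfl : X = loglogFlow := funext fun t => funext fun s => funext (hX t s)
  exact ⟨continuous_loglogField,
    fun t s x hx => ⟨loglogFlow_mem_Ioo t s hx, loglogFlow_self s hx.1,
      hasDerivAt_loglogFlow_time t s hx⟩,
    fun t ht p hp => lintegral_Ioo_zero_eq_top_of_inv_le (exp_pos _)
      (eventually_inv_le_abs_deriv_loglogFlow_rpow ht hp)⟩
end

section
/- Define b: ℝ → ℝ by b(y) = y · log(e/y) for 0 < y < e and b(y) = 0 otherwise. Then: (i) for every x ∈ (0,e) and every s ∈ ℝ, the function γ(t) = e · (x/e)^{exp(s−t)} takes values in (0,e), satisfies γ(s) = x, and γ'(t) = b(γ(t)) for all t ∈ ℝ; (ii) for every k ∈ (0,1) and every q ≥ 1, the function x ↦ k (x/e)^{k−1} on (0,e), which is the derivative in x of x ↦ e(x/e)^k, satisfies ∫_0^e ( k (x/e)^{k−1} )^q dx < +∞ if and only if q < 1/(1−k). -/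
open MeasureTheory Real Set

/-! Writing `X(t) = a (x/a)^{e^{s-t}}`, one has `log (a / X(t)) = -e^{s-t} log (x/a)`, and the chain
rule gives `X'(t) = -X(t) e^{s-t} log (x/a) = X(t) log (a / X(t))`, so `X` is the flow of
`y ↦ y log (a/y)`. For the integrability question, `(k (x/a)^{k-1})^q` is a constant multiple of
`x^{(k-1)q}`, which is integrable near `0` iff `(k-1)q > -1`, i.e. `q < 1/(1-k)`. -/

lemma mul_rpow_mem_Ioo {a c p : ℝ} (ha : 0 < a) (hc₀ : 0 < c) (hc₁ : c < 1) (hp : 0 < p) :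
    a * c ^ p ∈ Ioo 0 a :=
  ⟨mul_pos ha (rpow_pos_of_pos hc₀ p),
    mul_lt_of_lt_one_right ha (rpow_lt_one hc₀.le hc₁ hp)⟩

lemma log_div_mul_rpow {a c p : ℝ} (ha : 0 < a) (hc : 0 < c) :
    log (a / (a * c ^ p)) = -(p * log c) := by
  rw [div_mul_cancel_left₀ ha.ne', log_inv, log_rpow hc]

lemma hasDerivAt_mul_rpow_exp_sub {a c : ℝ} (ha : 0 < a) (hc : 0 < c) (s t : ℝ) :
    HasDerivAt (fun τ ↦ a * c ^ exp (s - τ))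
      (a * c ^ exp (s - t) * log (a / (a * c ^ exp (s - t)))) t := by
  have hexp : HasDerivAt (fun τ ↦ exp (s - τ)) (-exp (s - t)) t := by
    simpa using ((hasDerivAt_id t).const_sub s).exp
  have hpow := (hexp.const_rpow hc).const_mul a
  rw [log_div_mul_rpow ha hc]
  exact hpow.congr_deriv (by ring)

lemma hasDerivAt_mul_div_rpow {a k x : ℝ} (ha : a ≠ 0) (hx : x ≠ 0) :
    HasDerivAt (fun y ↦ a * (y / a) ^ k) (k * (x / a) ^ (k - 1)) x := by
  have hpow : HasDerivAt (fun z ↦ z ^ k) (k * (x / a) ^ (k - 1)) (x / a) :=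
    hasDerivAt_rpow_const (Or.inl (div_ne_zero hx ha))
  exact ((hpow.comp x ((hasDerivAt_id x).div_const a)).const_mul a).congr_deriv
    (by rw [mul_one_div, mul_div_cancel₀ _ ha])

lemma mul_div_rpow_rpow {a k q x : ℝ} (ha : 0 ≤ a) (hk : 0 ≤ k) (hx : 0 ≤ x) :
    (k * (x / a) ^ (k - 1)) ^ q = k ^ q / a ^ ((k - 1) * q) * x ^ ((k - 1) * q) := by
  have hxa : 0 ≤ x / a := div_nonneg hx ha
  rw [mul_rpow hk (rpow_nonneg hxa _), ← rpow_mul hxa, div_rpow hx ha]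
  ring

lemma lintegral_Ioo_ofReal_const_mul_rpow_ne_top_iff {a C α : ℝ} (ha : 0 < a) (hC : 0 < C) :
    ∫⁻ x in Ioo 0 a, ENNReal.ofReal (C * x ^ α) ≠ ⊤ ↔ -1 < α := by
  have hcont : ContinuousOn (fun x : ℝ ↦ C * x ^ α) (Ioo 0 a) := fun x hx ↦
    (continuousAt_const.mul (continuousAt_rpow_const x α (Or.inl hx.1.ne'))).continuousWithinAt
  have hnonneg : 0 ≤ᵐ[volume.restrict (Ioo 0 a)] fun x : ℝ ↦ C * x ^ α := by
    filter_upwards [ae_restrict_mem measurableSet_Ioo] with x hx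
    exact mul_nonneg hC.le (rpow_nonneg hx.1.le α)
  rw [lintegral_ofReal_ne_top_iff_integrable (hcont.aestronglyMeasurable measurableSet_Ioo)
    hnonneg, integrable_const_mul_iff (IsUnit.mk0 C hC.ne')]
  exact intervalIntegral.integrableOn_Ioo_rpow_iff ha

lemma lintegral_Ioo_ofReal_mul_div_rpow_ne_top_iff {a k q : ℝ} (ha : 0 < a) (hk : 0 < k) :
    ∫⁻ x in Ioo 0 a, ENNReal.ofReal ((k * (x / a) ^ (k - 1)) ^ q) ≠ ⊤ ↔ -1 < (k - 1) * q := by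
  have hC : 0 < k ^ q / a ^ ((k - 1) * q) :=
    div_pos (rpow_pos_of_pos hk q) (rpow_pos_of_pos ha _)
  rw [← lintegral_Ioo_ofReal_const_mul_rpow_ne_top_iff ha hC,
    setLIntegral_congr_fun measurableSet_Ioo fun x hx ↦ by
      rw [mul_div_rpow_rpow ha.le hk.le hx.1.le]]

theorem stmt_19 (b : ℝ → ℝ)
    (hb : ∀ y : ℝ, b y = if y ∈ Set.Ioo (0:ℝ) (Real.exp 1) then
      y * Real.log (Real.exp 1 / y) else 0) :
    (∀ x ∈ Set.Ioo (0:ℝ) (Real.exp 1), ∀ s : ℝ,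
      (∀ t : ℝ,
        Real.exp 1 * (x / Real.exp 1) ^ Real.exp (s - t) ∈ Set.Ioo (0:ℝ) (Real.exp 1)) ∧
      Real.exp 1 * (x / Real.exp 1) ^ Real.exp (s - s) = x ∧
      (∀ t : ℝ, HasDerivAt (fun τ : ℝ => Real.exp 1 * (x / Real.exp 1) ^ Real.exp (s - τ))
        (b (Real.exp 1 * (x / Real.exp 1) ^ Real.exp (s - t))) t)) ∧
    (∀ k ∈ Set.Ioo (0:ℝ) 1, ∀ q : ℝ, 1 ≤ q →
      ((∀ x ∈ Set.Ioo (0:ℝ) (Real.exp 1),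
        HasDerivAt (fun y : ℝ => Real.exp 1 * (y / Real.exp 1) ^ k)
          (k * (x / Real.exp 1) ^ (k - 1)) x) ∧
      ((∫⁻ x in Set.Ioo (0:ℝ) (Real.exp 1),
          ENNReal.ofReal ((k * (x / Real.exp 1) ^ (k - 1)) ^ q) ≠ ⊤) ↔
        q < 1 / (1 - k)))) := by
  have he : 0 < exp 1 := exp_pos 1
  refine ⟨fun x ⟨hx₀, hxe⟩ s ↦ ?_, fun k ⟨hk₀, hk₁⟩ q _ ↦ ?_⟩
  · have hc₀ : 0 < x / exp 1 := div_pos hx₀ he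
    have hmem (t : ℝ) : exp 1 * (x / exp 1) ^ exp (s - t) ∈ Ioo 0 (exp 1) :=
      mul_rpow_mem_Ioo he hc₀ ((div_lt_one he).2 hxe) (exp_pos _)
    refine ⟨hmem, by simp [mul_div_cancel₀ x he.ne'], fun t ↦ ?_⟩
    rw [hb, if_pos (hmem t)]
    exact hasDerivAt_mul_rpow_exp_sub he hc₀ s t
  · refine ⟨fun x hx ↦ hasDerivAt_mul_div_rpow he.ne' hx.1.ne', ?_⟩
    rw [lintegral_Ioo_ofReal_mul_div_rpow_ne_top_iff he hk₀, lt_div_iff₀ (by linarith)]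
    constructor <;> intro h <;> linarith [show (k - 1) * q = -(q * (1 - k)) by ring]
end
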